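/- arXiv:2202.13725 — 8 statements merged into one kernel-verified Lean document; each statement's English description precedes it below -/
import Mathlib

section
/- Let M be a compact subset of the unit sphere S^{n−1} = {v ∈ ℝⁿ : ‖v‖ = 1}, and suppose M is Lipschitz Normally Embedded. Then the cone C(M) = {t·v : t ∈ [0,∞), v ∈ M} ⊆ ℝⁿ is Lipschitz Normally Embedded. -/
open scoped ENNReal
open scoped NNReal

/-- The inner distance on a subset `X` of a (pseudo-e)metric space: the infimum of the
lengths (total variations) of continuous paths `γ : [0,1] → X` joining `x` to `y`. -/
noncomputable def innerDist {E : Type*} [PseudoEMetricSpace E] (X : Set E) (x y : E) : ℝ≥0∞ :=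
  ⨅ (γ : ℝ → E) (_ : ContinuousOn γ (Set.Icc 0 1))
    (_ : Set.MapsTo γ (Set.Icc 0 1) X) (_ : γ 0 = x) (_ : γ 1 = y),
    eVariationOn γ (Set.Icc 0 1)

/-- A subset `X` of a normed space is Lipschitz Normally Embedded (LNE) if there is a
constant `K ≥ 1` such that `d_i(x,y) ≤ K‖x − y‖` for all `x, y ∈ X`. -/
def IsLNE {E : Type*} [NormedAddCommGroup E] (X : Set E) : Prop :=
  ∃ K : ℝ, 1 ≤ K ∧ ∀ x ∈ X, ∀ y ∈ X, innerDist X x y ≤ ENNReal.ofReal (K * ‖x - y‖)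

lemma innerDist_le_path {E : Type*} [PseudoEMetricSpace E] {X : Set E} {x y : E} (γ : ℝ → E)
    (hc : ContinuousOn γ (Set.Icc 0 1)) (hm : Set.MapsTo γ (Set.Icc 0 1) X)
    (h0 : γ 0 = x) (h1 : γ 1 = y) : innerDist X x y ≤ eVariationOn γ (Set.Icc 0 1) :=
  iInf_le_of_le γ (iInf_le_of_le hc (iInf_le_of_le hm (iInf_le_of_le h0 (iInf_le _ h1))))

lemma exists_path {E : Type*} [PseudoEMetricSpace E] {X : Set E} {x y : E} {c : ℝ≥0∞}
    (h : innerDist X x y < c) :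
    ∃ γ : ℝ → E, ContinuousOn γ (Set.Icc 0 1) ∧ Set.MapsTo γ (Set.Icc 0 1) X ∧ γ 0 = x ∧
      γ 1 = y ∧ eVariationOn γ (Set.Icc 0 1) < c := by
  simp only [innerDist, iInf_lt_iff] at h
  obtain ⟨γ, hc, hm, h0, h1, hv⟩ := h
  exact ⟨γ, hc, hm, h0, h1, hv⟩

lemma innerDist_symm_le {E : Type*} [PseudoEMetricSpace E] (X : Set E) (x y : E) :
    innerDist X x y ≤ innerDist X y x := by
  rw [show innerDist X y x = ⨅ (γ : ℝ → E) (_ : ContinuousOn γ (Set.Icc 0 1))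
    (_ : Set.MapsTo γ (Set.Icc 0 1) X) (_ : γ 0 = y) (_ : γ 1 = x),
    eVariationOn γ (Set.Icc 0 1) from rfl]
  refine le_iInf fun γ => le_iInf fun hc => le_iInf fun hm => le_iInf fun h0 =>
    le_iInf fun h1 => ?_
  have himg : (fun r : ℝ => 1 - r) '' Set.Icc 0 1 = Set.Icc 0 1 := by
    rw [Set.image_const_sub_Icc]; norm_num
  have hmap : Set.MapsTo (fun r : ℝ => 1 - r) (Set.Icc 0 1) (Set.Icc 0 1) := by
    intro r hr
    simp only [Set.mem_Icc] at hr ⊢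
    constructor <;> linarith [hr.1, hr.2]
  have : innerDist X x y ≤ eVariationOn (γ ∘ fun r : ℝ => 1 - r) (Set.Icc 0 1) := by
    refine innerDist_le_path _ (hc.comp (by fun_prop) hmap) (hm.comp hmap) ?_ ?_
    · simpa using h1
    · simpa using h0
  refine this.trans ?_
  rw [eVariationOn.comp_eq_of_antitoneOn γ _ (fun a _ b _ hab => by simp; linarith), himg]

lemma innerDist_symm {E : Type*} [PseudoEMetricSpace E] (X : Set E) (x y : E) :
    innerDist X x y = innerDist X y x :=
  le_antisymm (innerDist_symm_le X x y) (innerDist_symm_le X y x)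

lemma evar_lipschitz {E : Type*} [PseudoEMetricSpace E] {f : ℝ → E} {C : ℝ≥0} {a b : ℝ}
    (hab : a ≤ b) (h : LipschitzOnWith C f (Set.Icc a b)) :
    eVariationOn f (Set.Icc a b) ≤ C * ENNReal.ofReal (b - a) := by
  apply iSup_le
  rintro ⟨m, u, hu, us⟩
  calc ∑ i ∈ Finset.range m, edist (f (u (i+1))) (f (u i))
      ≤ ∑ i ∈ Finset.range m, (C : ℝ≥0∞) * edist (u (i+1)) (u i) :=
        Finset.sum_le_sum fun i _ => h (us _) (us _)
    _ = C * ∑ i ∈ Finset.range m, edist (u (i+1)) (u i) := by rw [Finset.mul_sum]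
    _ ≤ C * ENNReal.ofReal (b - a) := by
        gcongr
        have he : ∀ i, edist (u (i+1)) (u i) = ENNReal.ofReal (u (i+1) - u i) := fun i => by
          rw [edist_dist, Real.dist_eq, abs_of_nonneg (sub_nonneg.mpr (hu (Nat.le_succ i)))]
        simp_rw [he]
        rw [← ENNReal.ofReal_sum_of_nonneg
          (fun i _ => sub_nonneg.mpr (hu (Nat.le_succ i))), Finset.sum_range_sub]
        exact ENNReal.ofReal_le_ofReal (by have := (us m).2; have := (us 0).1; linarith)

lemma key_ineq {n : ℕ} {u v : EuclideanSpace ℝ (Fin n)} (hu : ‖u‖ = 1) (hv : ‖v‖ = 1)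
    {s t : ℝ} (hs : 0 ≤ s) (hst : s ≤ t) :
    s * ‖u - v‖ ≤ ‖s • u - t • v‖ ∧ t - s ≤ ‖s • u - t • v‖ := by
  have ht : 0 ≤ t := hs.trans hst
  have hA := norm_sub_sq_real (s • u) (t • v)
  have hB := norm_sub_sq_real u v
  rw [real_inner_smul_left, real_inner_smul_right, norm_smul, norm_smul, hu, hv,
    Real.norm_eq_abs, Real.norm_eq_abs, abs_of_nonneg hs, abs_of_nonneg ht] at hA
  rw [hu, hv] at hB
  have hi : (inner ℝ u v : ℝ) ≤ 1 := by simpa [hu, hv] using real_inner_le_norm u v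
  have h1 : norm (s • u - t • v) ≥ 0 := norm_nonneg _
  have h2 : (0:ℝ) ≤ ‖u - v‖ := norm_nonneg _
  constructor
  · nlinarith [mul_nonneg (sub_nonneg.2 hst) (mul_nonneg hs (sub_nonneg.2 hi)),
      sq_nonneg (‖s • u - t • v‖ + s * ‖u - v‖), mul_nonneg hs h2, sq_nonneg (t - s)]
  · nlinarith [mul_nonneg (mul_nonneg hs ht) (sub_nonneg.2 hi),
      sq_nonneg (‖s • u - t • v‖ + (t - s))]

lemma continuousOn_union_isClosed {X Y : Type*} [TopologicalSpace X] [TopologicalSpace Y]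
    {s t : Set X} {f : X → Y} (hs : IsClosed s) (ht : IsClosed t)
    (hfs : ContinuousOn f s) (hft : ContinuousOn f t) : ContinuousOn f (s ∪ t) := by
  intro x hx
  apply ContinuousWithinAt.union
  · by_cases h : x ∈ s
    · exact hfs x h
    · exact continuousWithinAt_of_notMem_closure (by rwa [hs.closure_eq])
  · by_cases h : x ∈ t
    · exact hft x h
    · exact continuousWithinAt_of_notMem_closure (by rwa [ht.closure_eq])

lemma cone_aux {n : ℕ} {M : Set (EuclideanSpace ℝ (Fin n))} (hsphere : M ⊆ Metric.sphere 0 1)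
    {K : ℝ} (hK : 1 ≤ K)
    (hM : ∀ x ∈ M, ∀ y ∈ M, innerDist M x y ≤ ENNReal.ofReal (K * ‖x - y‖))
    {s t : ℝ} (hs : 0 ≤ s) (hst : s ≤ t)
    {u v : EuclideanSpace ℝ (Fin n)} (hu : u ∈ M) (hv : v ∈ M) :
    innerDist {p : EuclideanSpace ℝ (Fin n) | ∃ t : ℝ, 0 ≤ t ∧ ∃ v ∈ M, p = t • v}
      (s • u) (t • v) ≤ ENNReal.ofReal (2 * K * ‖s • u - t • v‖) := by
  have hun : ‖u‖ = 1 := by simpa using mem_sphere_zero_iff_norm.mp (hsphere hu)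
  have hvn : ‖v‖ = 1 := by simpa using mem_sphere_zero_iff_norm.mp (hsphere hv)
  have hkey := key_ineq hun hvn hs hst
  apply ENNReal.le_of_forall_pos_le_add
  intro ε hε _
  set ε' : ℝ := (ε : ℝ) / (s + 1) with hε'def
  have hε'pos : 0 < ε' := div_pos hε (by linarith)
  have hlt : innerDist M u v < ENNReal.ofReal (K * ‖u - v‖ + ε') :=
    lt_of_le_of_lt (hM u hu v hv)
      ((ENNReal.ofReal_lt_ofReal_iff (by positivity)).2 (by linarith))
  obtain ⟨γ, hγc, hγm, hγ0, hγ1, hγv⟩ := exists_path hlt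
  set c : ℝ → ℝ := fun r => (2 * r - 1) * (t - s) + s with hcdef
  set δ : ℝ → EuclideanSpace ℝ (Fin n) :=
    fun r => if r ≤ 1 / 2 then s • γ (2 * r) else (c r) • v with hδdef
  have hmap2 : Set.MapsTo (fun r : ℝ => 2 * r) (Set.Icc 0 (1/2)) (Set.Icc 0 1) := by
    intro r hr; simp only [Set.mem_Icc] at hr ⊢; constructor <;> linarith [hr.1, hr.2]
  have himg2 : (fun r : ℝ => 2 * r) '' Set.Icc 0 (1/2) = Set.Icc 0 1 := by
    rw [Set.image_mul_left_Icc (by norm_num) (by norm_num)]; norm_num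
  have eqon1 : Set.EqOn δ (fun r : ℝ => s • γ (2 * r)) (Set.Icc 0 (1/2)) := fun r hr =>
    if_pos hr.2
  have eqon2 : Set.EqOn δ (fun r : ℝ => (c r) • v) (Set.Icc (1/2) 1) := by
    intro r hr
    by_cases h : r ≤ 1 / 2
    · have hr2 : r = 1 / 2 := le_antisymm h hr.1
      subst hr2
      simp only [δ, if_pos le_rfl, hcdef]
      norm_num [hγ1]
    · simp only [δ, if_neg h]
  have hc1 : ContinuousOn (fun r : ℝ => s • γ (2 * r)) (Set.Icc 0 (1/2)) :=
    (hγc.comp ((continuous_const.mul continuous_id).continuousOn) hmap2).const_smul s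
  have hc2 : ContinuousOn (fun r : ℝ => (c r) • v) (Set.Icc (1/2) 1) :=
    (((by fun_prop : Continuous c)).smul continuous_const).continuousOn
  have hcont : ContinuousOn δ (Set.Icc 0 1) := by
    rw [show Set.Icc (0:ℝ) 1 = Set.Icc 0 (1/2) ∪ Set.Icc (1/2) 1 from
      (Set.Icc_union_Icc_eq_Icc (by norm_num) (by norm_num)).symm]
    exact continuousOn_union_isClosed isClosed_Icc isClosed_Icc
      (hc1.congr eqon1) (hc2.congr eqon2)
  have hmaps : Set.MapsTo δ (Set.Icc 0 1)
      {p : EuclideanSpace ℝ (Fin n) | ∃ t : ℝ, 0 ≤ t ∧ ∃ v ∈ M, p = t • v} := by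
    intro r hr
    simp only [Set.mem_Icc] at hr
    by_cases h : r ≤ 1 / 2
    · simp only [δ, if_pos h, Set.mem_setOf_eq]
      exact ⟨s, hs, γ (2 * r), hγm ⟨by linarith [hr.1], by linarith⟩, rfl⟩
    · push_neg at h
      simp only [δ, if_neg (not_le.mpr h), Set.mem_setOf_eq]
      exact ⟨c r, by simp only [hcdef]; nlinarith [hr.1, hr.2], v, hv, rfl⟩
  have hδ0 : δ 0 = s • u := by
    simp only [δ]
    rw [if_pos (by norm_num)]
    norm_num [hγ0]
  have hδ1 : δ 1 = t • v := by
    simp only [δ]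
    rw [if_neg (by norm_num)]
    have : c 1 = t := by simp only [hcdef]; ring
    rw [this]
  have e1 : eVariationOn δ (Set.Icc 0 (1/2)) ≤
      ENNReal.ofReal s * ENNReal.ofReal (K * ‖u - v‖ + ε') := by
    rw [eVariationOn.eq_of_eqOn eqon1]
    have hrw : (fun r : ℝ => s • γ (2 * r)) =
        ((fun w : EuclideanSpace ℝ (Fin n) => s • w) ∘ γ) ∘ (fun r : ℝ => 2 * r) := rfl
    rw [hrw, eVariationOn.comp_eq_of_monotoneOn _ _
      (fun a _ b _ hab => by show 2*a ≤ 2*b; linarith), himg2]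
    calc eVariationOn ((fun w : EuclideanSpace ℝ (Fin n) => s • w) ∘ γ) (Set.Icc 0 1)
        ≤ (‖s‖₊ : ℝ≥0∞) * eVariationOn γ (Set.Icc 0 1) :=
          ((lipschitzWith_smul s).lipschitzOnWith).comp_eVariationOn_le (Set.mapsTo_univ _ _)
      _ ≤ ENNReal.ofReal s * ENNReal.ofReal (K * ‖u - v‖ + ε') := by
          rw [show ((‖s‖₊ : ℝ≥0∞)) = ENNReal.ofReal s from Real.enorm_eq_ofReal hs]
          exact mul_le_mul_right hγv.le _
  have e2 : eVariationOn δ (Set.Icc (1/2) 1) ≤ ENNReal.ofReal (t - s) := by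
    rw [eVariationOn.eq_of_eqOn eqon2]
    have hlip : LipschitzOnWith (2 * (t - s)).toNNReal (fun r : ℝ => (c r) • v)
        (Set.Icc (1/2) 1) := by
      apply LipschitzOnWith.of_dist_le_mul
      intro x _ y _
      rw [dist_eq_norm, ← sub_smul, norm_smul, hvn, Real.norm_eq_abs,
        Real.coe_toNNReal _ (by linarith), Real.dist_eq]
      have : c x - c y = 2 * (t - s) * (x - y) := by simp only [hcdef]; ring
      rw [this, abs_mul, abs_of_nonneg (by linarith : (0:ℝ) ≤ 2 * (t - s)), mul_one]
    refine (evar_lipschitz (by norm_num) hlip).trans ?_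
    rw [show ((2 * (t - s)).toNNReal : ℝ≥0∞) = ENNReal.ofReal (2 * (t - s)) from rfl,
      ← ENNReal.ofReal_mul (by linarith)]
    exact ENNReal.ofReal_le_ofReal (le_of_eq (by ring))
  have hsum : eVariationOn δ (Set.Icc 0 (1/2)) + eVariationOn δ (Set.Icc (1/2) 1) =
      eVariationOn δ (Set.Icc 0 1) := by
    have h1 : Set.Icc (0:ℝ) 1 ∩ Set.Icc 0 (1/2) = Set.Icc 0 (1/2) :=
      Set.inter_eq_self_of_subset_right (Set.Icc_subset_Icc le_rfl (by norm_num))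
    have h2 : Set.Icc (0:ℝ) 1 ∩ Set.Icc (1/2) 1 = Set.Icc (1/2) 1 :=
      Set.inter_eq_self_of_subset_right (Set.Icc_subset_Icc (by norm_num) le_rfl)
    have h3 : Set.Icc (0:ℝ) 1 ∩ Set.Icc 0 1 = Set.Icc 0 1 := Set.inter_self _
    have := eVariationOn.Icc_add_Icc δ (s := Set.Icc (0:ℝ) 1)
      (by norm_num : (0:ℝ) ≤ 1/2) (by norm_num : (1/2:ℝ) ≤ 1)
      (by norm_num : (1/2:ℝ) ∈ Set.Icc (0:ℝ) 1)
    rwa [h1, h2, h3] at this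
  have hsε : s * ε' ≤ (ε : ℝ) := by
    rw [hε'def, mul_div_assoc']
    rw [div_le_iff₀ (by linarith : (0:ℝ) < s + 1)]
    nlinarith [ε.coe_nonneg]
  calc innerDist _ (s • u) (t • v) ≤ eVariationOn δ (Set.Icc 0 1) :=
        innerDist_le_path δ hcont hmaps hδ0 hδ1
    _ = eVariationOn δ (Set.Icc 0 (1/2)) + eVariationOn δ (Set.Icc (1/2) 1) := hsum.symm
    _ ≤ ENNReal.ofReal s * ENNReal.ofReal (K * ‖u - v‖ + ε') + ENNReal.ofReal (t - s) :=
        add_le_add e1 e2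
    _ = ENNReal.ofReal (s * (K * ‖u - v‖ + ε') + (t - s)) := by
        rw [← ENNReal.ofReal_mul hs, ← ENNReal.ofReal_add (by positivity) (by linarith)]
    _ ≤ ENNReal.ofReal (2 * K * ‖s • u - t • v‖ + s * ε') := by
        apply ENNReal.ofReal_le_ofReal
        nlinarith [hkey.1, hkey.2, norm_nonneg (s • u - t • v), norm_nonneg (u - v),
          mul_nonneg hs (norm_nonneg (u - v))]
    _ ≤ ENNReal.ofReal (2 * K * ‖s • u - t • v‖) + ↑ε := by
        rw [ENNReal.ofReal_add (by positivity) (by positivity)]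
        gcongr
        calc ENNReal.ofReal (s * ε') ≤ ENNReal.ofReal (ε : ℝ) :=
              ENNReal.ofReal_le_ofReal hsε
          _ = ↑ε := ENNReal.ofReal_coe_nnreal

theorem stmt1 {n : ℕ} (M : Set (EuclideanSpace ℝ (Fin n)))
    (hcompact : IsCompact M) (hsphere : M ⊆ Metric.sphere 0 1) (hLNE : IsLNE M) :
    IsLNE {p : EuclideanSpace ℝ (Fin n) | ∃ t : ℝ, 0 ≤ t ∧ ∃ v ∈ M, p = t • v} := by
  obtain ⟨K, hK, hM⟩ := hLNE
  refine ⟨2 * K, by linarith, ?_⟩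
  rintro x ⟨s, hs, u, hu, rfl⟩ y ⟨t, ht, v, hv, rfl⟩
  rcases le_total s t with h | h
  · exact cone_aux hsphere hK hM hs h hu hv
  · rw [innerDist_symm, norm_sub_rev]
    exact cone_aux hsphere hK hM ht h hv hu
end

section
/- Let B ⊆ ℝⁿ be a compact convex set with 0 in its interior, and let B₁ be the closed unit ball of ℝⁿ. Define φ : B → B₁ by φ(0) = 0 and φ(x) = (gauge_B(x)/‖x‖)·x for x ≠ 0, where gauge_B is the Minkowski gauge (Minkowski functional) of B; thus φ maps each ray from 0 to the boundary of B linearly onto the ray in the same direction of length 1. Then φ is a bijection from B onto B₁ and there exists a constant K ≥ 1 such that K⁻¹‖x−y‖ ≤ ‖φ(x)−φ(y)‖ ≤ K‖x−y‖ for all x, y ∈ B; that is, φ is a bilipschitz homeomorphism. -/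
open scoped ENNReal

section Aux

variable {E : Type*} [NormedAddCommGroup E] [NormedSpace ℝ E]

/-- Normalization map estimate. -/
lemma norm_normalize_sub_le (x y : E) (hx : x ≠ 0) (hy : y ≠ 0) (hle : ‖y‖ ≤ ‖x‖) :
    ‖‖x‖⁻¹ • x - ‖y‖⁻¹ • y‖ ≤ 2 * ‖x - y‖ / ‖x‖ := by
  have hx0 : (0:ℝ) < ‖x‖ := norm_pos_iff.mpr hx
  have hy0 : (0:ℝ) < ‖y‖ := norm_pos_iff.mpr hy
  have key : ‖x‖⁻¹ • x - ‖y‖⁻¹ • y = ‖x‖⁻¹ • ((x - y) + (1 - ‖x‖/‖y‖) • y) := by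
    rw [smul_add, smul_sub, smul_smul]
    have : ‖x‖⁻¹ * (1 - ‖x‖/‖y‖) = ‖x‖⁻¹ - ‖y‖⁻¹ := by field_simp
    rw [this, sub_smul]
    abel
  rw [key]
  have h1 : ‖(1 - ‖x‖/‖y‖) • y‖ = ‖x‖ - ‖y‖ := by
    rw [norm_smul, Real.norm_eq_abs]
    have : |1 - ‖x‖/‖y‖| = ‖x‖/‖y‖ - 1 := by
      rw [abs_sub_comm, abs_of_nonneg]
      have : (1:ℝ) ≤ ‖x‖/‖y‖ := (one_le_div hy0).mpr hle
      linarith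
    rw [this]
    field_simp
  have h2 : ‖x‖ - ‖y‖ ≤ ‖x - y‖ := by
    have := abs_norm_sub_norm_le x y
    have := le_abs_self (‖x‖ - ‖y‖)
    linarith
  calc ‖‖x‖⁻¹ • ((x - y) + (1 - ‖x‖/‖y‖) • y)‖
      = ‖x‖⁻¹ * ‖(x - y) + (1 - ‖x‖/‖y‖) • y‖ := by
        rw [norm_smul, Real.norm_eq_abs, abs_of_nonneg (by positivity)]
    _ ≤ ‖x‖⁻¹ * (‖x - y‖ + ‖(1 - ‖x‖/‖y‖) • y‖) := by
        gcongr; exact norm_add_le _ _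
    _ ≤ ‖x‖⁻¹ * (‖x - y‖ + ‖x - y‖) := by
        gcongr; rw [h1]; exact h2
    _ = 2 * ‖x - y‖ / ‖x‖ := by ring

/-- A `0`-homogeneous scalar field `h`, bounded and Lipschitz on the sphere, gives a
Lipschitz radial map `x ↦ h x • x`. -/
lemma homog_lip (h : E → ℝ) (b L : ℝ) (hb0 : 0 ≤ b) (hL : 0 ≤ L)
    (hb : ∀ x : E, x ≠ 0 → |h x| ≤ b)
    (hhom : ∀ (t : ℝ), 0 < t → ∀ x : E, x ≠ 0 → h (t • x) = h x)
    (hlip : ∀ x y : E, ‖x‖ = 1 → ‖y‖ = 1 → |h x - h y| ≤ L * ‖x - y‖) :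
    ∀ x y : E, ‖h x • x - h y • y‖ ≤ (b + 2 * L) * ‖x - y‖ := by
  -- first the case `‖y‖ ≤ ‖x‖`
  have main : ∀ x y : E, ‖y‖ ≤ ‖x‖ → ‖h x • x - h y • y‖ ≤ (b + 2 * L) * ‖x - y‖ := by
    intro x y hle
    rcases eq_or_ne x 0 with rfl | hx
    · have : y = 0 := by
        have := norm_nonneg y; simp only [norm_zero] at hle
        exact norm_eq_zero.mp (le_antisymm hle (norm_nonneg y))
      simp [this]
    rcases eq_or_ne y 0 with rfl | hy
    · simp only [smul_zero, sub_zero]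
      calc ‖h x • x‖ = |h x| * ‖x‖ := by rw [norm_smul, Real.norm_eq_abs]
        _ ≤ b * ‖x‖ := by gcongr; exact hb x hx
        _ ≤ (b + 2 * L) * ‖x‖ := by nlinarith [norm_nonneg x]
    have hx0 : (0:ℝ) < ‖x‖ := norm_pos_iff.mpr hx
    have hy0 : (0:ℝ) < ‖y‖ := norm_pos_iff.mpr hy
    set u := ‖x‖⁻¹ • x with hu
    set v := ‖y‖⁻¹ • y with hv
    have hun : ‖u‖ = 1 := by
      rw [hu, norm_smul, Real.norm_eq_abs, abs_of_nonneg (by positivity), inv_mul_cancel₀ hx0.ne']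
    have hvn : ‖v‖ = 1 := by
      rw [hv, norm_smul, Real.norm_eq_abs, abs_of_nonneg (by positivity), inv_mul_cancel₀ hy0.ne']
    have hu0 : u ≠ 0 := by intro hc; rw [hc] at hun; simp at hun
    have hv0 : v ≠ 0 := by intro hc; rw [hc] at hvn; simp at hvn
    have hxu : h x = h u := by
      have : (‖x‖ : ℝ) • u = x := by rw [hu, smul_smul, mul_inv_cancel₀ hx0.ne', one_smul]
      rw [← this, hhom ‖x‖ hx0 u hu0]
    have hyv : h y = h v := by
      have : (‖y‖ : ℝ) • v = y := by rw [hv, smul_smul, mul_inv_cancel₀ hy0.ne', one_smul]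
      rw [← this, hhom ‖y‖ hy0 v hv0]
    have hdiff : |h x - h y| ≤ L * (2 * ‖x - y‖ / ‖x‖) := by
      rw [hxu, hyv]
      calc |h u - h v| ≤ L * ‖u - v‖ := hlip u v hun hvn
        _ ≤ L * (2 * ‖x - y‖ / ‖x‖) := by
            gcongr
            exact norm_normalize_sub_le x y hx hy hle
    have decomp : h x • x - h y • y = h x • (x - y) + (h x - h y) • y := by
      rw [smul_sub, sub_smul]; abel
    calc ‖h x • x - h y • y‖ = ‖h x • (x - y) + (h x - h y) • y‖ := by rw [decomp]
      _ ≤ ‖h x • (x - y)‖ + ‖(h x - h y) • y‖ := norm_add_le _ _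
      _ = |h x| * ‖x - y‖ + |h x - h y| * ‖y‖ := by
          rw [norm_smul, norm_smul, Real.norm_eq_abs, Real.norm_eq_abs]
      _ ≤ b * ‖x - y‖ + (L * (2 * ‖x - y‖ / ‖x‖)) * ‖y‖ :=
          add_le_add (mul_le_mul_of_nonneg_right (hb x hx) (norm_nonneg _))
            (mul_le_mul_of_nonneg_right hdiff (norm_nonneg _))
      _ ≤ b * ‖x - y‖ + 2 * L * ‖x - y‖ := by
          have hle2 : L * (2 * ‖x - y‖ / ‖x‖) * ‖y‖ ≤ 2 * L * ‖x - y‖ := by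
            have h' : L * (2 * ‖x - y‖) * ‖y‖ ≤ 2 * L * ‖x - y‖ * ‖x‖ := by
              nlinarith [mul_nonneg hL (norm_nonneg (x - y)), hle]
            calc L * (2 * ‖x - y‖ / ‖x‖) * ‖y‖
                = (L * (2 * ‖x - y‖) * ‖y‖) / ‖x‖ := by ring
              _ ≤ (2 * L * ‖x - y‖ * ‖x‖) / ‖x‖ := by gcongr
              _ = 2 * L * ‖x - y‖ := by field_simp
          linarith
      _ = (b + 2 * L) * ‖x - y‖ := by ring
  intro x y
  rcases le_total ‖y‖ ‖x‖ with hle | hle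
  · exact main x y hle
  · rw [norm_sub_rev, norm_sub_rev x y]
    exact main y x hle

end Aux

theorem stmt2 {n : ℕ} (B : Set (EuclideanSpace ℝ (Fin n)))
    (hcompact : IsCompact B) (hconvex : Convex ℝ B) (h0 : 0 ∈ interior B)
    (φ : EuclideanSpace ℝ (Fin n) → EuclideanSpace ℝ (Fin n))
    (hφ : ∀ x, φ x = (gauge B x / ‖x‖) • x) :
    Set.BijOn φ B (Metric.closedBall 0 1) ∧
    ∃ K : ℝ, 1 ≤ K ∧ ∀ x ∈ B, ∀ y ∈ B,
      K⁻¹ * ‖x - y‖ ≤ ‖φ x - φ y‖ ∧ ‖φ x - φ y‖ ≤ K * ‖x - y‖ := by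
  have hBnhds : B ∈ nhds (0 : EuclideanSpace ℝ (Fin n)) := mem_interior_iff_mem_nhds.mp h0
  have habs : Absorbent ℝ B := absorbent_nhds_zero hBnhds
  -- inner ball
  obtain ⟨ε, hε, hball⟩ := Metric.mem_nhds_iff.mp hBnhds
  -- outer ball
  obtain ⟨R₀, hR₀⟩ := hcompact.isBounded.subset_closedBall 0
  set R : ℝ := max R₀ 1 with hRdef
  have hR1 : (1:ℝ) ≤ R := le_max_right _ _
  have hR : B ⊆ Metric.closedBall 0 R :=
    hR₀.trans (Metric.closedBall_subset_closedBall (le_max_left _ _))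
  have hRpos : (0:ℝ) < R := lt_of_lt_of_le one_pos hR1
  set g := gauge B with hg
  -- basic gauge estimates
  have g_le : ∀ x : EuclideanSpace ℝ (Fin n), g x ≤ ‖x‖ / ε := fun x => by
    have := mul_gauge_le_norm (x := x) hball
    rw [le_div_iff₀ hε]; linarith [this]
  have le_g : ∀ x : EuclideanSpace ℝ (Fin n), ‖x‖ / R ≤ g x := fun x =>
    le_gauge_of_subset_closedBall habs hRpos.le hR
  have g_nonneg : ∀ x : EuclideanSpace ℝ (Fin n), 0 ≤ g x := fun x => gauge_nonneg x
  have g_pos : ∀ x : EuclideanSpace ℝ (Fin n), x ≠ 0 → 0 < g x := fun x hx =>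
    lt_of_lt_of_le (div_pos (norm_pos_iff.mpr hx) hRpos) (le_g x)
  have g_add : ∀ x y : EuclideanSpace ℝ (Fin n), g (x + y) ≤ g x + g y := gauge_add_le hconvex habs
  have g_lip : ∀ x y : EuclideanSpace ℝ (Fin n), |g x - g y| ≤ ε⁻¹ * ‖x - y‖ := by
    intro x y
    rw [abs_sub_le_iff]
    constructor
    · have h1 : g x ≤ g y + g (x - y) := by
        have := g_add y (x - y); simpa using this
      have h2 : g (x - y) ≤ ‖x - y‖ / ε := g_le _
      rw [div_eq_inv_mul] at h2; linarith
    · have h1 : g y ≤ g x + g (y - x) := by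
        have := g_add x (y - x); simpa using this
      have h2 : g (y - x) ≤ ‖y - x‖ / ε := g_le _
      rw [div_eq_inv_mul, norm_sub_rev] at h2; linarith
  have g_smul : ∀ (t : ℝ), 0 ≤ t → ∀ x : EuclideanSpace ℝ (Fin n), g (t • x) = t * g x := fun t ht x =>
    gauge_smul_of_nonneg ht x
  -- membership characterization
  have mem_iff : ∀ x : EuclideanSpace ℝ (Fin n), x ∈ B ↔ g x ≤ 1 := by
    intro x
    constructor
    · exact fun hx => gauge_le_one_of_mem hx
    · intro hx
      have := (gauge_le_one_iff_mem_closure hconvex hBnhds).mp hx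
      rwa [hcompact.isClosed.closure_eq] at this
  -- norm of φ x
  have hφ0 : φ 0 = 0 := by rw [hφ]; simp
  have norm_φ : ∀ x : EuclideanSpace ℝ (Fin n), x ≠ 0 → ‖φ x‖ = g x := by
    intro x hx
    have hx0 : (0:ℝ) < ‖x‖ := norm_pos_iff.mpr hx
    rw [hφ, norm_smul, Real.norm_eq_abs, abs_of_nonneg (div_nonneg (g_nonneg x) (norm_nonneg x)),
      div_mul_cancel₀ _ hx0.ne']
  -- the inverse map
  set ψ : EuclideanSpace ℝ (Fin n) → EuclideanSpace ℝ (Fin n) := fun y => (‖y‖ / g y) • y with hψ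
  have hψ0 : ψ 0 = 0 := by simp [hψ]
  have gauge_φ : ∀ x : EuclideanSpace ℝ (Fin n), x ≠ 0 → g (φ x) = (g x / ‖x‖) * g x := by
    intro x hx
    rw [hφ]
    exact g_smul _ (div_nonneg (g_nonneg x) (norm_nonneg x)) x
  have hψφ : ∀ x : EuclideanSpace ℝ (Fin n), ψ (φ x) = x := by
    intro x
    rcases eq_or_ne x 0 with rfl | hx
    · rw [hφ0, hψ0]
    have hx0 : (0:ℝ) < ‖x‖ := norm_pos_iff.mpr hx
    have hgx : (0:ℝ) < g x := g_pos x hx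
    have h1 : ‖φ x‖ = g x := norm_φ x hx
    have h2 : g (φ x) = (g x / ‖x‖) * g x := gauge_φ x hx
    simp only [hψ]
    rw [h1, h2, hφ, smul_smul]
    have : g x / (g x / ‖x‖ * g x) * (g x / ‖x‖) = 1 := by
      field_simp
    rw [this, one_smul]
  have gauge_ψ : ∀ y : EuclideanSpace ℝ (Fin n), y ≠ 0 → g (ψ y) = ‖y‖ := by
    intro y hy
    have hgy : (0:ℝ) < g y := g_pos y hy
    simp only [hψ]
    rw [g_smul _ (div_nonneg (norm_nonneg y) (g_nonneg y)) y, div_mul_cancel₀ _ hgy.ne']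
  have hφψ : ∀ y : EuclideanSpace ℝ (Fin n), φ (ψ y) = y := by
    intro y
    rcases eq_or_ne y 0 with rfl | hy
    · rw [hψ0, hφ0]
    have hy0 : (0:ℝ) < ‖y‖ := norm_pos_iff.mpr hy
    have hgy : (0:ℝ) < g y := g_pos y hy
    have hψy : ψ y ≠ 0 := by
      simp only [hψ]
      intro hc
      rcases smul_eq_zero.mp hc with h | h
      · rw [div_eq_zero_iff] at h
        rcases h with h | h
        · exact hy0.ne' h
        · exact hgy.ne' h
      · exact hy h
    have h1 : ‖ψ y‖ = (‖y‖ / g y) * ‖y‖ := by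
      simp only [hψ]
      rw [norm_smul, Real.norm_eq_abs, abs_of_nonneg (div_nonneg (norm_nonneg y) (g_nonneg y))]
    have h2 : g (ψ y) = ‖y‖ := gauge_ψ y hy
    rw [hφ, h2, h1]
    simp only [hψ, smul_smul]
    have : ‖y‖ / (‖y‖ / g y * ‖y‖) * (‖y‖ / g y) = 1 := by
      field_simp
    rw [this, one_smul]
  -- Part 1 : bijection
  have hbij : Set.BijOn φ B (Metric.closedBall 0 1) := by
    refine ⟨?_, ?_, ?_⟩
    · intro x hx
      rcases eq_or_ne x 0 with rfl | hx0
      · rw [hφ0]; simp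
      · rw [Metric.mem_closedBall, dist_zero_right, norm_φ x hx0]
        exact (mem_iff x).mp hx
    · intro x _ y _ hxy
      have := congrArg ψ hxy
      rwa [hψφ, hψφ] at this
    · intro y hy
      rcases eq_or_ne y 0 with rfl | hy0
      · exact ⟨0, interior_subset h0, hφ0⟩
      · refine ⟨ψ y, ?_, hφψ y⟩
        rw [mem_iff, gauge_ψ y hy0]
        rwa [Metric.mem_closedBall, dist_zero_right] at hy
  refine ⟨hbij, ?_⟩
  -- Part 2 : bilipschitz
  -- φ is Lipschitz with constant K₁ = 3/ε
  set h₁ : EuclideanSpace ℝ (Fin n) → ℝ := fun x => g x / ‖x‖ with hh₁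
  have hφeq : ∀ x : EuclideanSpace ℝ (Fin n), φ x = h₁ x • x := fun x => hφ x
  have lip₁ : ∀ x y : EuclideanSpace ℝ (Fin n), ‖φ x - φ y‖ ≤ (ε⁻¹ + 2 * ε⁻¹) * ‖x - y‖ := by
    intro x y
    rw [hφeq, hφeq]
    refine homog_lip h₁ ε⁻¹ ε⁻¹ (by positivity) (by positivity) ?_ ?_ ?_ x y
    · intro x hx
      have hx0 : (0:ℝ) < ‖x‖ := norm_pos_iff.mpr hx
      simp only [hh₁]
      rw [abs_of_nonneg (div_nonneg (g_nonneg x) (norm_nonneg x)), div_le_iff₀ hx0]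
      calc g x ≤ ‖x‖ / ε := g_le x
        _ = ε⁻¹ * ‖x‖ := by ring
    · intro t ht x hx
      have hx0 : (0:ℝ) < ‖x‖ := norm_pos_iff.mpr hx
      simp only [hh₁]
      rw [g_smul t ht.le x, norm_smul, Real.norm_eq_abs, abs_of_pos ht]
      field_simp
      try ring
    · intro x y hx hy
      simp only [hh₁, hx, hy, div_one]
      exact g_lip x y
  -- ψ is Lipschitz with constant K₂ = R + 2 R² / ε
  set h₂ : EuclideanSpace ℝ (Fin n) → ℝ := fun y => ‖y‖ / g y with hh₂
  have hψeq : ∀ y : EuclideanSpace ℝ (Fin n), ψ y = h₂ y • y := fun y => rfl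
  have lip₂ : ∀ x y : EuclideanSpace ℝ (Fin n), ‖ψ x - ψ y‖ ≤ (R + 2 * (R^2 * ε⁻¹)) * ‖x - y‖ := by
    intro x y
    rw [hψeq, hψeq]
    refine homog_lip h₂ R (R^2 * ε⁻¹) hRpos.le (by positivity) ?_ ?_ ?_ x y
    · intro x hx
      have hx0 : (0:ℝ) < ‖x‖ := norm_pos_iff.mpr hx
      have hgx : (0:ℝ) < g x := g_pos x hx
      simp only [hh₂]
      rw [abs_of_nonneg (div_nonneg (norm_nonneg x) (g_nonneg x)), div_le_iff₀ hgx]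
      have := le_g x
      rw [div_le_iff₀ hRpos] at this
      linarith
    · intro t ht x hx
      have hx0 : (0:ℝ) < ‖x‖ := norm_pos_iff.mpr hx
      have hgx : (0:ℝ) < g x := g_pos x hx
      simp only [hh₂]
      rw [g_smul t ht.le x, norm_smul, Real.norm_eq_abs, abs_of_pos ht]
      field_simp
      try ring
    · intro x y hxn hyn
      have hx : x ≠ 0 := by intro hc; rw [hc] at hxn; simp at hxn
      have hy : y ≠ 0 := by intro hc; rw [hc] at hyn; simp at hyn
      have hgx : (0:ℝ) < g x := g_pos x hx
      have hgy : (0:ℝ) < g y := g_pos y hy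
      have hgxR : R⁻¹ ≤ g x := by
        have := le_g x; rw [hxn] at this
        rwa [inv_eq_one_div]
      have hgyR : R⁻¹ ≤ g y := by
        have := le_g y; rw [hyn] at this
        rwa [inv_eq_one_div]
      simp only [hh₂, hxn, hyn]
      have key : (1:ℝ) / g x - 1 / g y = (g y - g x) / (g x * g y) := by
        field_simp
      rw [key, abs_div, abs_of_pos (mul_pos hgx hgy)]
      have h1 : |g y - g x| ≤ ε⁻¹ * ‖x - y‖ := by
        rw [abs_sub_comm]; exact g_lip x y
      have h2 : R⁻¹ * R⁻¹ ≤ g x * g y := by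
        have hRi : (0:ℝ) < R⁻¹ := by positivity
        calc R⁻¹ * R⁻¹ ≤ g x * R⁻¹ := by gcongr
          _ ≤ g x * g y := by gcongr
      have h3 : (0:ℝ) < g x * g y := mul_pos hgx hgy
      rw [div_le_iff₀ h3]
      calc |g y - g x| ≤ ε⁻¹ * ‖x - y‖ := h1
        _ = (R^2 * ε⁻¹ * ‖x - y‖) * (R⁻¹ * R⁻¹) := by
            field_simp
        _ ≤ (R^2 * ε⁻¹ * ‖x - y‖) * (g x * g y) :=
            mul_le_mul_of_nonneg_left h2 (by positivity)
  set K₁ : ℝ := ε⁻¹ + 2 * ε⁻¹ with hK₁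
  set K₂ : ℝ := R + 2 * (R^2 * ε⁻¹) with hK₂
  set K : ℝ := max 1 (max K₁ K₂) with hK
  have hK1 : (1:ℝ) ≤ K := le_max_left _ _
  have hKpos : (0:ℝ) < K := lt_of_lt_of_le one_pos hK1
  have hKK₁ : K₁ ≤ K := le_trans (le_max_left _ _) (le_max_right _ _)
  have hKK₂ : K₂ ≤ K := le_trans (le_max_right _ _) (le_max_right _ _)
  refine ⟨K, hK1, fun x _ y _ => ⟨?_, ?_⟩⟩
  · -- lower bound
    have : ‖x - y‖ ≤ K₂ * ‖φ x - φ y‖ := by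
      have := lip₂ (φ x) (φ y)
      rwa [hψφ, hψφ] at this
    have h2 : ‖x - y‖ ≤ K * ‖φ x - φ y‖ := by
      calc ‖x - y‖ ≤ K₂ * ‖φ x - φ y‖ := this
        _ ≤ K * ‖φ x - φ y‖ := by gcongr
    calc K⁻¹ * ‖x - y‖ ≤ K⁻¹ * (K * ‖φ x - φ y‖) := by gcongr
      _ = ‖φ x - φ y‖ := by field_simp
  · calc ‖φ x - φ y‖ ≤ K₁ * ‖x - y‖ := lip₁ x y
      _ ≤ K * ‖x - y‖ := by gcongr
end

section
/- Let S = {(x,y,z) ∈ ℝ³ : x² + y² = z³}. The germ of S at the origin is Lipschitz Normally Embedded: there exist a neighborhood U of 0 in ℝ³ and a constant K ≥ 1 such that for all p, q ∈ S ∩ U the inner distance of p and q within S ∩ U is at most K‖p−q‖. -/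
open scoped ENNReal

open Set

open scoped ENNReal

-- basic helpers
private lemma norm3 (x : EuclideanSpace ℝ (Fin 3)) :
    ‖x‖ = Real.sqrt ((x 0) ^ 2 + (x 1) ^ 2 + (x 2) ^ 2) := by
  rw [EuclideanSpace.norm_eq]
  simp [Fin.sum_univ_three, Real.norm_eq_abs, sq_abs]

private lemma coord2_le_norm (x : EuclideanSpace ℝ (Fin 3)) : |x 2| ≤ ‖x‖ := by
  rw [norm3, ← Real.sqrt_sq_eq_abs]
  apply Real.sqrt_le_sqrt
  nlinarith [sq_nonneg (x 0), sq_nonneg (x 1)]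

private lemma dist3_le (x y : EuclideanSpace ℝ (Fin 3)) :
    dist x y ≤ |x 0 - y 0| + |x 1 - y 1| + |x 2 - y 2| := by
  rw [EuclideanSpace.dist_eq, Fin.sum_univ_three, Real.dist_eq, Real.dist_eq, Real.dist_eq]
  rw [show |x 0 - y 0| ^ 2 + |x 1 - y 1| ^ 2 + |x 2 - y 2| ^ 2
      = (x 0 - y 0) ^ 2 + (x 1 - y 1) ^ 2 + (x 2 - y 2) ^ 2 by simp [sq_abs]] at *
  calc Real.sqrt ((x 0 - y 0) ^ 2 + (x 1 - y 1) ^ 2 + (x 2 - y 2) ^ 2)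
      ≤ Real.sqrt ((|x 0 - y 0| + |x 1 - y 1| + |x 2 - y 2|) ^ 2) := by
        apply Real.sqrt_le_sqrt
        nlinarith [abs_nonneg (x 0 - y 0), abs_nonneg (x 1 - y 1), abs_nonneg (x 2 - y 2),
          sq_abs (x 0 - y 0), sq_abs (x 1 - y 1), sq_abs (x 2 - y 2),
          mul_nonneg (abs_nonneg (x 0 - y 0)) (abs_nonneg (x 1 - y 1)),
          mul_nonneg (abs_nonneg (x 0 - y 0)) (abs_nonneg (x 2 - y 2)),
          mul_nonneg (abs_nonneg (x 1 - y 1)) (abs_nonneg (x 2 - y 2))]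
    _ = |x 0 - y 0| + |x 1 - y 1| + |x 2 - y 2| := by
        apply Real.sqrt_sq
        positivity

private lemma cube_lip {s a b : ℝ} (ha : 0 ≤ a) (has : a ≤ s) (hb : 0 ≤ b) (hbs : b ≤ s) :
    |a ^ 3 - b ^ 3| ≤ 3 * s ^ 2 * |a - b| := by
  have hs : 0 ≤ s := ha.trans has
  rcases le_total a b with h | h
  · have hin : 0 ≤ 3 * s ^ 2 - (a ^ 2 + a * b + b ^ 2) := by
      nlinarith [mul_le_mul has has ha hs, mul_le_mul hbs hbs hb hs, mul_le_mul has hbs hb hs]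
    have key : 0 ≤ (b - a) * (3 * s ^ 2 - (a ^ 2 + a * b + b ^ 2)) :=
      mul_nonneg (by linarith) hin
    have key2 : 0 ≤ (b - a) * (a ^ 2 + a * b + b ^ 2) :=
      mul_nonneg (by linarith) (by nlinarith [sq_nonneg (a + b), mul_nonneg ha hb])
    rw [abs_of_nonpos (by nlinarith [key2]), abs_of_nonpos (by linarith)]
    nlinarith [key]
  · have hin : 0 ≤ 3 * s ^ 2 - (a ^ 2 + a * b + b ^ 2) := by
      nlinarith [mul_le_mul has has ha hs, mul_le_mul hbs hbs hb hs, mul_le_mul has hbs hb hs]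
    have key : 0 ≤ (a - b) * (3 * s ^ 2 - (a ^ 2 + a * b + b ^ 2)) :=
      mul_nonneg (by linarith) hin
    have key2 : 0 ≤ (a - b) * (a ^ 2 + a * b + b ^ 2) :=
      mul_nonneg (by linarith) (by nlinarith [sq_nonneg (a + b), mul_nonneg ha hb])
    rw [abs_of_nonneg (by nlinarith [key2]), abs_of_nonneg (by linarith)]
    nlinarith [key]

private lemma sq_lip {s a b : ℝ} (ha : 0 ≤ a) (has : a ≤ s) (hb : 0 ≤ b) (hbs : b ≤ s) :
    |a ^ 2 - b ^ 2| ≤ 2 * s * |a - b| := by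
  have hs : 0 ≤ s := ha.trans has
  rcases le_total a b with h | h
  · rw [abs_of_nonpos (by nlinarith), abs_of_nonpos (by linarith)]; nlinarith
  · rw [abs_of_nonneg (by nlinarith), abs_of_nonneg (by linarith)]; nlinarith

private lemma cos_lip (a b : ℝ) : |Real.cos a - Real.cos b| ≤ |a - b| := by
  rw [Real.cos_sub_cos, abs_mul, abs_mul, abs_neg]
  have h1 : |Real.sin ((a + b) / 2)| ≤ 1 :=
    abs_le.2 ⟨Real.neg_one_le_sin _, Real.sin_le_one _⟩
  have h2 : |Real.sin ((a - b) / 2)| ≤ |(a - b) / 2| := Real.abs_sin_le_abs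
  have h3 : |(a - b) / 2| = |a - b| / 2 := by rw [abs_div]; norm_num
  have h4 : |(2 : ℝ)| = 2 := by norm_num
  rw [h4]
  nlinarith [abs_nonneg (Real.sin ((a - b) / 2)), abs_nonneg (a - b),
    abs_nonneg (Real.sin ((a + b) / 2))]

private lemma sin_lip (a b : ℝ) : |Real.sin a - Real.sin b| ≤ |a - b| := by
  rw [Real.sin_sub_sin, abs_mul, abs_mul]
  have h1 : |Real.cos ((a + b) / 2)| ≤ 1 := Real.abs_cos_le_one _
  have h2 : |Real.sin ((a - b) / 2)| ≤ |(a - b) / 2| := Real.abs_sin_le_abs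
  have h3 : |(a - b) / 2| = |a - b| / 2 := by rw [abs_div]; norm_num
  have h4 : |(2 : ℝ)| = 2 := by norm_num
  rw [h4]
  nlinarith [abs_nonneg (Real.sin ((a - b) / 2)), abs_nonneg (a - b),
    abs_nonneg (Real.cos ((a + b) / 2))]

private lemma evar_le_of_dist {F : Type*} [PseudoMetricSpace F] (f : ℝ → F) {L : ℝ} (hL : 0 ≤ L)
    (h : ∀ u ∈ Icc (0 : ℝ) 1, ∀ v ∈ Icc (0 : ℝ) 1, dist (f u) (f v) ≤ L * dist u v) :
    eVariationOn f (Icc 0 1) ≤ ENNReal.ofReal L := by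
  have hlip : LipschitzOnWith (Real.toNNReal L) f (Icc 0 1) := by
    rw [lipschitzOnWith_iff_dist_le_mul]
    intro x hx y hy
    rw [Real.coe_toNNReal L hL]
    exact h x hx y hy
  have h1 : eVariationOn (f ∘ id) (Icc (0:ℝ) 1) ≤ (Real.toNNReal L : ℝ≥0∞) * eVariationOn id (Icc (0:ℝ) 1) :=
    hlip.comp_eVariationOn_le (Set.mapsTo_id _)
  have h2 : eVariationOn (id : ℝ → ℝ) (Icc 0 1) ≤ ENNReal.ofReal 1 := by
    have h3 := (monotoneOn_id (s := Icc (0:ℝ) 1)).eVariationOn_le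
      (left_mem_Icc.2 zero_le_one) (right_mem_Icc.2 zero_le_one)
    simpa using h3
  calc eVariationOn f (Icc 0 1) = eVariationOn (f ∘ id) (Icc (0:ℝ) 1) := rfl
    _ ≤ (Real.toNNReal L : ℝ≥0∞) * eVariationOn id (Icc (0:ℝ) 1) := h1
    _ ≤ (Real.toNNReal L : ℝ≥0∞) * ENNReal.ofReal 1 := by gcongr
    _ = ENNReal.ofReal L := by
        rw [ENNReal.ofReal_one, mul_one, ENNReal.ofReal]


private noncomputable def hornR (t s u : ℝ) : ℝ := t + (s - t) * min (2 * u) 1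
private noncomputable def hornθ (α δ u : ℝ) : ℝ := α + δ * max (2 * u - 1) 0

private noncomputable def hornγ (t s α δ : ℝ) : ℝ → EuclideanSpace ℝ (Fin 3) := fun u =>
  (WithLp.equiv 2 (Fin 3 → ℝ)).symm
    ![(hornR t s u) ^ 3 * Real.cos (hornθ α δ u),
      (hornR t s u) ^ 3 * Real.sin (hornθ α δ u),
      (hornR t s u) ^ 2]

private lemma hornγ₀ (t s α δ u : ℝ) :
    hornγ t s α δ u 0 = (hornR t s u) ^ 3 * Real.cos (hornθ α δ u) := rfl
private lemma hornγ₁ (t s α δ u : ℝ) :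
    hornγ t s α δ u 1 = (hornR t s u) ^ 3 * Real.sin (hornθ α δ u) := rfl
private lemma hornγ₂ (t s α δ u : ℝ) :
    hornγ t s α δ u 2 = (hornR t s u) ^ 2 := rfl

private lemma hornR_mem {t s : ℝ} (hts : t ≤ s) {u : ℝ} (hu : u ∈ Icc (0:ℝ) 1) :
    t ≤ hornR t s u ∧ hornR t s u ≤ s := by
  have h1 : 0 ≤ min (2 * u) 1 := le_min (by linarith [hu.1]) zero_le_one
  have h2 : min (2 * u) 1 ≤ 1 := min_le_right _ _
  unfold hornR
  constructor <;> nlinarith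

private lemma hornR_lip (t s u v : ℝ) (hts : t ≤ s) :
    |hornR t s u - hornR t s v| ≤ 2 * (s - t) * |u - v| := by
  unfold hornR
  rw [show t + (s - t) * min (2 * u) 1 - (t + (s - t) * min (2 * v) 1)
      = (s - t) * (min (2 * u) 1 - min (2 * v) 1) by ring, abs_mul,
    abs_of_nonneg (by linarith : (0:ℝ) ≤ s - t)]
  have h := abs_min_sub_min_le_max (2 * u) 1 (2 * v) 1
  simp only [sub_self, abs_zero] at h
  have h2 : |min (2 * u) 1 - min (2 * v) 1| ≤ 2 * |u - v| := by
    refine h.trans ?_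
    rw [max_eq_left (abs_nonneg _), show 2 * u - 2 * v = 2 * (u - v) by ring, abs_mul]
    norm_num
  nlinarith [abs_nonneg (min (2 * u) 1 - min (2 * v) 1)]

private lemma hornθ_lip (α δ u v : ℝ) :
    |hornθ α δ u - hornθ α δ v| ≤ 2 * |δ| * |u - v| := by
  unfold hornθ
  rw [show α + δ * max (2 * u - 1) 0 - (α + δ * max (2 * v - 1) 0)
      = δ * (max (2 * u - 1) 0 - max (2 * v - 1) 0) by ring, abs_mul]
  have h := abs_max_sub_max_le_max (2 * u - 1) 0 (2 * v - 1) 0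
  simp only [sub_self, abs_zero] at h
  have h2 : |max (2 * u - 1) 0 - max (2 * v - 1) 0| ≤ 2 * |u - v| := by
    refine h.trans ?_
    rw [max_eq_left (abs_nonneg _), show 2 * u - 1 - (2 * v - 1) = 2 * (u - v) by ring, abs_mul]
    norm_num
  nlinarith [abs_nonneg δ, abs_nonneg (max (2 * u - 1) 0 - max (2 * v - 1) 0)]


private lemma horn_lip {t s : ℝ} (α δ : ℝ) (ht0 : 0 ≤ t) (hts : t ≤ s) (hs1 : s ≤ 1)
    {u v : ℝ} (hu : u ∈ Icc (0:ℝ) 1) (hv : v ∈ Icc (0:ℝ) 1) :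
    dist (hornγ t s α δ u) (hornγ t s α δ v)
      ≤ (12 * s ^ 2 * (s - t) + 4 * s * (s - t) + 4 * s ^ 3 * |δ|) * dist u v := by
  have hs0 : 0 ≤ s := ht0.trans hts
  obtain ⟨hru1, hru2⟩ := hornR_mem hts hu
  obtain ⟨hrv1, hrv2⟩ := hornR_mem hts hv
  have hru0 : 0 ≤ hornR t s u := ht0.trans hru1
  have hrv0 : 0 ≤ hornR t s v := ht0.trans hrv1
  have hRl := hornR_lip t s u v hts
  have hθl := hornθ_lip α δ u v
  have hcube := cube_lip hru0 hru2 hrv0 hrv2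
  have hsq := sq_lip hru0 hru2 hrv0 hrv2
  have hrv3 : (hornR t s v) ^ 3 ≤ s ^ 3 := pow_le_pow_left₀ hrv0 hrv2 3
  have habs_rv3 : |(hornR t s v) ^ 3| = (hornR t s v) ^ 3 := abs_of_nonneg (by positivity)
  -- coordinate 0
  have d0 : |hornγ t s α δ u 0 - hornγ t s α δ v 0|
      ≤ (6 * s ^ 2 * (s - t) + 2 * s ^ 3 * |δ|) * |u - v| := by
    rw [hornγ₀, hornγ₀]
    have e : (hornR t s u) ^ 3 * Real.cos (hornθ α δ u)
          - (hornR t s v) ^ 3 * Real.cos (hornθ α δ v)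
        = ((hornR t s u) ^ 3 - (hornR t s v) ^ 3) * Real.cos (hornθ α δ u)
          + (hornR t s v) ^ 3 * (Real.cos (hornθ α δ u) - Real.cos (hornθ α δ v)) := by ring
    rw [e]
    refine (abs_add_le _ _).trans ?_
    rw [abs_mul, abs_mul, habs_rv3]
    have b1 : |(hornR t s u) ^ 3 - (hornR t s v) ^ 3| * |Real.cos (hornθ α δ u)|
        ≤ 3 * s ^ 2 * (2 * (s - t) * |u - v|) := by
      calc |(hornR t s u) ^ 3 - (hornR t s v) ^ 3| * |Real.cos (hornθ α δ u)|
          ≤ |(hornR t s u) ^ 3 - (hornR t s v) ^ 3| * 1 :=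
            mul_le_mul_of_nonneg_left (Real.abs_cos_le_one _) (abs_nonneg _)
        _ = |(hornR t s u) ^ 3 - (hornR t s v) ^ 3| := mul_one _
        _ ≤ 3 * s ^ 2 * |hornR t s u - hornR t s v| := hcube
        _ ≤ 3 * s ^ 2 * (2 * (s - t) * |u - v|) :=
            mul_le_mul_of_nonneg_left hRl (by positivity)
    have b2 : (hornR t s v) ^ 3 * |Real.cos (hornθ α δ u) - Real.cos (hornθ α δ v)|
        ≤ s ^ 3 * (2 * |δ| * |u - v|) := by
      calc (hornR t s v) ^ 3 * |Real.cos (hornθ α δ u) - Real.cos (hornθ α δ v)|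
          ≤ s ^ 3 * |hornθ α δ u - hornθ α δ v| := by
            apply mul_le_mul hrv3 (cos_lip _ _) (abs_nonneg _) (by positivity)
        _ ≤ s ^ 3 * (2 * |δ| * |u - v|) := mul_le_mul_of_nonneg_left hθl (by positivity)
    nlinarith [b1, b2]
  -- coordinate 1
  have d1 : |hornγ t s α δ u 1 - hornγ t s α δ v 1|
      ≤ (6 * s ^ 2 * (s - t) + 2 * s ^ 3 * |δ|) * |u - v| := by
    rw [hornγ₁, hornγ₁]
    have e : (hornR t s u) ^ 3 * Real.sin (hornθ α δ u)
          - (hornR t s v) ^ 3 * Real.sin (hornθ α δ v)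
        = ((hornR t s u) ^ 3 - (hornR t s v) ^ 3) * Real.sin (hornθ α δ u)
          + (hornR t s v) ^ 3 * (Real.sin (hornθ α δ u) - Real.sin (hornθ α δ v)) := by ring
    rw [e]
    refine (abs_add_le _ _).trans ?_
    rw [abs_mul, abs_mul, habs_rv3]
    have b1 : |(hornR t s u) ^ 3 - (hornR t s v) ^ 3| * |Real.sin (hornθ α δ u)|
        ≤ 3 * s ^ 2 * (2 * (s - t) * |u - v|) := by
      calc |(hornR t s u) ^ 3 - (hornR t s v) ^ 3| * |Real.sin (hornθ α δ u)|
          ≤ |(hornR t s u) ^ 3 - (hornR t s v) ^ 3| * 1 :=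
            mul_le_mul_of_nonneg_left (Real.abs_sin_le_one _) (abs_nonneg _)
        _ = |(hornR t s u) ^ 3 - (hornR t s v) ^ 3| := mul_one _
        _ ≤ 3 * s ^ 2 * |hornR t s u - hornR t s v| := hcube
        _ ≤ 3 * s ^ 2 * (2 * (s - t) * |u - v|) :=
            mul_le_mul_of_nonneg_left hRl (by positivity)
    have b2 : (hornR t s v) ^ 3 * |Real.sin (hornθ α δ u) - Real.sin (hornθ α δ v)|
        ≤ s ^ 3 * (2 * |δ| * |u - v|) := by
      calc (hornR t s v) ^ 3 * |Real.sin (hornθ α δ u) - Real.sin (hornθ α δ v)|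
          ≤ s ^ 3 * |hornθ α δ u - hornθ α δ v| := by
            apply mul_le_mul hrv3 (sin_lip _ _) (abs_nonneg _) (by positivity)
        _ ≤ s ^ 3 * (2 * |δ| * |u - v|) := mul_le_mul_of_nonneg_left hθl (by positivity)
    nlinarith [b1, b2]
  -- coordinate 2
  have d2 : |hornγ t s α δ u 2 - hornγ t s α δ v 2| ≤ 4 * s * (s - t) * |u - v| := by
    rw [hornγ₂, hornγ₂]
    calc |(hornR t s u) ^ 2 - (hornR t s v) ^ 2|
        ≤ 2 * s * |hornR t s u - hornR t s v| := hsq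
      _ ≤ 2 * s * (2 * (s - t) * |u - v|) := mul_le_mul_of_nonneg_left hRl (by positivity)
      _ = 4 * s * (s - t) * |u - v| := by ring
  have hd := dist3_le (hornγ t s α δ u) (hornγ t s α δ v)
  rw [Real.dist_eq]
  have hfin : (6 * s ^ 2 * (s - t) + 2 * s ^ 3 * |δ|) * |u - v|
      + (6 * s ^ 2 * (s - t) + 2 * s ^ 3 * |δ|) * |u - v|
      + 4 * s * (s - t) * |u - v|
      = (12 * s ^ 2 * (s - t) + 4 * s * (s - t) + 4 * s ^ 3 * |δ|) * |u - v| := by ring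
  linarith [hd, d0, d1, d2]


private lemma angle_bound {t s δ C : ℝ} (ht0 : 0 ≤ t) (hts : t ≤ s) (hC0 : 0 ≤ C)
    (hδπ : |δ| ≤ Real.pi)
    (hC2 : C ^ 2 = t ^ 6 + s ^ 6 - 2 * t ^ 3 * s ^ 3 * Real.cos δ) :
    s ^ 3 * |δ| ≤ 7 * C := by
  have hs0 : 0 ≤ s := ht0.trans hts
  by_cases hcase : 2 * t ^ 3 ≤ s ^ 3
  · have h1 : (s ^ 3 - t ^ 3) ^ 2 ≤ C ^ 2 := by
      rw [hC2]
      nlinarith [mul_nonneg (mul_nonneg (pow_nonneg ht0 3) (pow_nonneg hs0 3))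
        (sub_nonneg.2 (Real.cos_le_one δ))]
    have ht3s3 : t ^ 3 ≤ s ^ 3 := pow_le_pow_left₀ ht0 hts 3
    have h2 : s ^ 3 - t ^ 3 ≤ C :=
      calc s ^ 3 - t ^ 3 = Real.sqrt ((s ^ 3 - t ^ 3) ^ 2) :=
            (Real.sqrt_sq (by linarith)).symm
        _ ≤ Real.sqrt (C ^ 2) := Real.sqrt_le_sqrt h1
        _ = C := Real.sqrt_sq hC0
    have h3 : s ^ 3 ≤ 2 * C := by linarith
    have h4 : s ^ 3 * |δ| ≤ s ^ 3 * Real.pi :=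
      mul_le_mul_of_nonneg_left hδπ (by positivity)
    have h5 : s ^ 3 * Real.pi ≤ 2 * C * Real.pi :=
      mul_le_mul_of_nonneg_right h3 Real.pi_pos.le
    nlinarith [Real.pi_lt_d2, hC0]
  · push_neg at hcase
    have hπ := Real.pi_pos
    have hjordan : |δ| ≤ Real.pi * Real.sin (|δ| / 2) := by
      have hj := Real.mul_le_sin (x := |δ| / 2) (by positivity) (by linarith [hδπ])
      have he : 2 / Real.pi * (|δ| / 2) = |δ| / Real.pi := by
        field_simp
      rw [he] at hj
      have := (div_le_iff₀ hπ).1 hj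
      linarith
    have hsinsq : Real.sin (|δ| / 2) ^ 2 = (1 - Real.cos δ) / 2 := by
      have h1 : Real.sin (δ / 2) ^ 2 = (1 - Real.cos δ) / 2 := by
        have hc := Real.cos_sq (δ / 2)
        have hs' := Real.sin_sq (δ / 2)
        rw [show 2 * (δ / 2) = δ by ring] at hc
        linarith
      have h2 : Real.sin (|δ| / 2) ^ 2 = Real.sin (δ / 2) ^ 2 := by
        rcases abs_cases δ with ⟨h, _⟩ | ⟨h, _⟩
        · rw [h]
        · rw [h, show -δ / 2 = -(δ / 2) by ring, Real.sin_neg, neg_sq]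
      rw [h2, h1]
    have hδsq : δ ^ 2 ≤ Real.pi ^ 2 * ((1 - Real.cos δ) / 2) := by
      have h1 : |δ| ^ 2 ≤ (Real.pi * Real.sin (|δ| / 2)) ^ 2 :=
        pow_le_pow_left₀ (abs_nonneg δ) hjordan 2
      rw [sq_abs] at h1
      calc δ ^ 2 ≤ (Real.pi * Real.sin (|δ| / 2)) ^ 2 := h1
        _ = Real.pi ^ 2 * Real.sin (|δ| / 2) ^ 2 := by ring
        _ = Real.pi ^ 2 * ((1 - Real.cos δ) / 2) := by rw [hsinsq]
    have hstep2 : s ^ 6 * (1 - Real.cos δ) ≤ C ^ 2 := by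
      rw [hC2]
      nlinarith [mul_nonneg (sub_nonneg.2 (Real.cos_le_one δ))
          (mul_nonneg (pow_nonneg hs0 3) (by linarith : (0:ℝ) ≤ 2 * t ^ 3 - s ^ 3)),
        sq_nonneg (t ^ 3 - s ^ 3)]
    have hstep3 : 2 * (s ^ 6 * δ ^ 2) ≤ Real.pi ^ 2 * C ^ 2 := by
      have h6 : (0:ℝ) ≤ s ^ 6 := by positivity
      have h7 := mul_le_mul_of_nonneg_left hδsq h6
      have h8 := mul_le_mul_of_nonneg_left hstep2 (sq_nonneg Real.pi)
      nlinarith [h7, h8]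
    have hπ2 : Real.pi ^ 2 ≤ 10 := by nlinarith [Real.pi_lt_d2, Real.pi_pos]
    have h9 : (s ^ 3 * |δ|) ^ 2 ≤ (7 * C) ^ 2 := by
      have h10 : (s ^ 3 * |δ|) ^ 2 = s ^ 6 * δ ^ 2 := by
        rw [mul_pow, ← sq_abs δ]; ring
      have h11 : Real.pi ^ 2 * C ^ 2 ≤ 10 * C ^ 2 :=
        mul_le_mul_of_nonneg_right hπ2 (sq_nonneg C)
      nlinarith [hstep3]
    calc s ^ 3 * |δ| = Real.sqrt ((s ^ 3 * |δ|) ^ 2) :=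
          (Real.sqrt_sq (by positivity)).symm
      _ ≤ Real.sqrt ((7 * C) ^ 2) := Real.sqrt_le_sqrt h9
      _ = 7 * C := Real.sqrt_sq (by positivity)


private lemma sqrt_cube {z : ℝ} (hz : 0 ≤ z) : Real.sqrt (z ^ 3) = (Real.sqrt z) ^ 3 := by
  have h1 : Real.sqrt (z ^ 3) = z * Real.sqrt z := by
    rw [show z ^ 3 = z * z * z by ring, Real.sqrt_mul (mul_nonneg hz hz),
      Real.sqrt_mul_self hz]
  rw [h1, show (Real.sqrt z) ^ 3 = (Real.sqrt z) ^ 2 * Real.sqrt z by ring, Real.sq_sqrt hz]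

set_option maxHeartbeats 2000000 in
private lemma horn_path (p q : EuclideanSpace ℝ (Fin 3))
    (hp : (p 0) ^ 2 + (p 1) ^ 2 = (p 2) ^ 3) (hq : (q 0) ^ 2 + (q 1) ^ 2 = (q 2) ^ 3)
    (hqU : ‖q‖ < 1) (hle : p 2 ≤ q 2) :
    ∃ γ : ℝ → EuclideanSpace ℝ (Fin 3),
      ContinuousOn γ (Set.Icc 0 1) ∧
      Set.MapsTo γ (Set.Icc 0 1)
        ({p' : EuclideanSpace ℝ (Fin 3) | (p' 0) ^ 2 + (p' 1) ^ 2 = (p' 2) ^ 3}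
          ∩ Metric.ball 0 1) ∧
      γ 0 = p ∧ γ 1 = q ∧
      eVariationOn γ (Set.Icc 0 1) ≤ ENNReal.ofReal (100 * ‖p - q‖) := by
  have hz : 0 ≤ p 2 := by
    have h0 : (0:ℝ) ≤ (p 2) ^ 3 := by rw [← hp]; positivity
    exact (Odd.pow_nonneg_iff (by decide : Odd 3)).1 h0
  have hw : 0 ≤ q 2 := le_trans hz hle
  set t : ℝ := Real.sqrt (p 2) with ht_def
  set s : ℝ := Real.sqrt (q 2) with hs_def
  have ht2 : t ^ 2 = p 2 := Real.sq_sqrt hz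
  have hs2 : s ^ 2 = q 2 := Real.sq_sqrt hw
  have ht0 : 0 ≤ t := Real.sqrt_nonneg _
  have hs0 : 0 ≤ s := Real.sqrt_nonneg _
  have hts : t ≤ s := Real.sqrt_le_sqrt hle
  have hs1 : s ≤ 1 := by
    nlinarith [coord2_le_norm q, le_abs_self (q 2)]
  set wp : ℂ := (p 0 : ℂ) + (p 1 : ℂ) * Complex.I with hwp_def
  set wq : ℂ := (q 0 : ℂ) + (q 1 : ℂ) * Complex.I with hwq_def
  have habs_p : ‖wp‖ = t ^ 3 := by
    rw [hwp_def, Complex.norm_add_mul_I, hp, ht_def, sqrt_cube hz]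
  have habs_q : ‖wq‖ = s ^ 3 := by
    rw [hwq_def, Complex.norm_add_mul_I, hq, hs_def, sqrt_cube hw]
  set α : ℝ := if wp = 0 then Complex.arg wq else Complex.arg wp with hα_def
  set δ : ℝ := Complex.arg (wq / wp) with hδ_def
  have hδπ : |δ| ≤ Real.pi := Complex.abs_arg_le_pi _
  have hP : ((t ^ 3 : ℝ) : ℂ) * Complex.exp (α * Complex.I) = wp := by
    by_cases h : wp = 0
    · have h3 : t ^ 3 = 0 := by rw [← habs_p, h, norm_zero]
      rw [h, h3]; simp
    · rw [hα_def, if_neg h, ← habs_p]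
      exact Complex.norm_mul_exp_arg_mul_I wp
  have hQ : ((s ^ 3 : ℝ) : ℂ) * Complex.exp ((α + δ : ℝ) * Complex.I) = wq := by
    by_cases hq0 : wq = 0
    · have h3 : s ^ 3 = 0 := by rw [← habs_q, hq0, norm_zero]
      rw [hq0, h3]; simp
    · by_cases hp0 : wp = 0
      · rw [hα_def, if_pos hp0, hδ_def, hp0, div_zero, Complex.arg_zero, add_zero, ← habs_q]
        exact Complex.norm_mul_exp_arg_mul_I wq
      · have hd : wq / wp ≠ 0 := div_ne_zero hq0 hp0
        have e1 : ((‖wq / wp‖ : ℝ) : ℂ) * Complex.exp (δ * Complex.I) = wq / wp :=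
          Complex.norm_mul_exp_arg_mul_I _
        have ht3 : t ^ 3 ≠ 0 := by rw [← habs_p]; exact norm_ne_zero_iff.mpr hp0
        have hs3 : s ^ 3 ≠ 0 := by rw [← habs_q]; exact norm_ne_zero_iff.mpr hq0
        have habs_div : ‖wq / wp‖ = s ^ 3 / t ^ 3 := by
          rw [norm_div, habs_p, habs_q]
        have hsplit : ((α + δ : ℝ) : ℂ) * Complex.I = (α : ℂ) * Complex.I + (δ : ℂ) * Complex.I := by
          push_cast; ring
        rw [hsplit, Complex.exp_add]
        have ht3' : ((t ^ 3 : ℝ) : ℂ) ≠ 0 := by exact_mod_cast ht3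
        have e2 : ((‖wq / wp‖ : ℝ) : ℂ) * Complex.exp ((δ : ℂ) * Complex.I) * wp
            = wq := by
          rw [e1, div_mul_cancel₀ _ hp0]
        rw [habs_div] at e2
        have key : ((s ^ 3 : ℝ) : ℂ) * (Complex.exp ((α : ℂ) * Complex.I)
              * Complex.exp ((δ : ℂ) * Complex.I))
            = ((s ^ 3 / t ^ 3 : ℝ) : ℂ) * Complex.exp ((δ : ℂ) * Complex.I)
              * (((t ^ 3 : ℝ) : ℂ) * Complex.exp ((α : ℂ) * Complex.I)) := by
          have htR : t ≠ 0 := by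
            intro h; exact ht3 (by rw [h]; ring)
          have htC : (t : ℂ) ≠ 0 := by exact_mod_cast htR
          push_cast
          field_simp
        rw [key, hP, e2]
  have hp0c : p 0 = t ^ 3 * Real.cos α := by
    have h := congrArg Complex.re hP
    simp only [Complex.re_ofReal_mul, Complex.exp_ofReal_mul_I_re, hwp_def,
      Complex.add_re, Complex.ofReal_re, Complex.mul_re, Complex.I_re, Complex.I_im,
      Complex.ofReal_im] at h
    linarith [h]
  have hp1c : p 1 = t ^ 3 * Real.sin α := by
    have h := congrArg Complex.im hP
    simp only [Complex.im_ofReal_mul, Complex.exp_ofReal_mul_I_im, hwp_def,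
      Complex.add_im, Complex.ofReal_im, Complex.mul_im, Complex.I_re, Complex.I_im,
      Complex.ofReal_re] at h
    linarith [h]
  have hq0c : q 0 = s ^ 3 * Real.cos (α + δ) := by
    have h := congrArg Complex.re hQ
    simp only [Complex.re_ofReal_mul, Complex.exp_ofReal_mul_I_re, hwq_def,
      Complex.add_re, Complex.ofReal_re, Complex.mul_re, Complex.I_re, Complex.I_im,
      Complex.ofReal_im] at h
    linarith [h]
  have hq1c : q 1 = s ^ 3 * Real.sin (α + δ) := by
    have h := congrArg Complex.im hQ
    simp only [Complex.im_ofReal_mul, Complex.exp_ofReal_mul_I_im, hwq_def,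
      Complex.add_im, Complex.ofReal_im, Complex.mul_im, Complex.I_re, Complex.I_im,
      Complex.ofReal_re] at h
    linarith [h]
  -- chord and distance facts
  set C : ℝ := Real.sqrt ((p 0 - q 0) ^ 2 + (p 1 - q 1) ^ 2) with hC_def
  have hC0 : 0 ≤ C := Real.sqrt_nonneg _
  have hD3 : ‖p - q‖ = Real.sqrt ((p 0 - q 0) ^ 2 + (p 1 - q 1) ^ 2 + (p 2 - q 2) ^ 2) := by
    rw [norm3, PiLp.sub_apply, PiLp.sub_apply, PiLp.sub_apply]
  have hD0 : (0:ℝ) ≤ ‖p - q‖ := norm_nonneg _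
  have hCD : C ≤ ‖p - q‖ := by
    rw [hD3, hC_def]
    apply Real.sqrt_le_sqrt
    linarith only [sq_nonneg (p 2 - q 2)]
  have h2D : s ^ 2 - t ^ 2 ≤ ‖p - q‖ := by
    have he : s ^ 2 - t ^ 2 = |p 2 - q 2| := by
      rw [abs_of_nonpos (by linarith), ht2, hs2]; ring
    rw [he, ← Real.sqrt_sq_eq_abs, hD3]
    apply Real.sqrt_le_sqrt
    linarith only [sq_nonneg (p 0 - q 0), sq_nonneg (p 1 - q 1)]
  have hC2 : C ^ 2 = t ^ 6 + s ^ 6 - 2 * t ^ 3 * s ^ 3 * Real.cos δ := by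
    rw [hC_def, Real.sq_sqrt (by positivity), hp0c, hp1c, hq0c, hq1c,
      Real.cos_add, Real.sin_add]
    linear_combination (t ^ 6 + s ^ 6 * (Real.sin δ ^ 2 + Real.cos δ ^ 2)
        - 2 * t ^ 3 * s ^ 3 * Real.cos δ) * Real.sin_sq_add_cos_sq α
      + s ^ 6 * Real.sin_sq_add_cos_sq δ
  -- the angular bound
  have hAngle : s ^ 3 * |δ| ≤ 7 * C := angle_bound ht0 hts hC0 hδπ hC2
  -- the path lies on the horn, inside the ball
  have hmaps : Set.MapsTo (hornγ t s α δ) (Icc 0 1)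
      ({p' : EuclideanSpace ℝ (Fin 3) | (p' 0) ^ 2 + (p' 1) ^ 2 = (p' 2) ^ 3}
        ∩ Metric.ball 0 1) := by
    intro u hu
    obtain ⟨hr1, hr2⟩ := hornR_mem hts hu
    have hr0 : 0 ≤ hornR t s u := ht0.trans hr1
    constructor
    · show (hornγ t s α δ u 0) ^ 2 + (hornγ t s α δ u 1) ^ 2 = (hornγ t s α δ u 2) ^ 3
      rw [hornγ₀, hornγ₁, hornγ₂]
      linear_combination (hornR t s u) ^ 6 * Real.sin_sq_add_cos_sq (hornθ α δ u)
    · rw [Metric.mem_ball, dist_zero_right]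
      have hle2 : ‖hornγ t s α δ u‖ ≤ ‖q‖ := by
        rw [norm3, norm3 q, hornγ₀, hornγ₁, hornγ₂, hq0c, hq1c, ← hs2]
        apply Real.sqrt_le_sqrt
        have h6 : (hornR t s u) ^ 6 ≤ s ^ 6 := pow_le_pow_left₀ hr0 hr2 6
        have h4 : (hornR t s u) ^ 4 ≤ s ^ 4 := pow_le_pow_left₀ hr0 hr2 4
        have e1 : (hornR t s u) ^ 6 * (Real.sin (hornθ α δ u) ^ 2
            + Real.cos (hornθ α δ u) ^ 2) = (hornR t s u) ^ 6 := by
          rw [Real.sin_sq_add_cos_sq]; ring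
        have e2 : s ^ 6 * (Real.sin (α + δ) ^ 2 + Real.cos (α + δ) ^ 2) = s ^ 6 := by
          rw [Real.sin_sq_add_cos_sq]; ring
        linarith only [e1, e2, h6, h4]
      exact lt_of_le_of_lt hle2 hqU
  -- endpoints
  have hend0 : hornγ t s α δ 0 = p := by
    have ha : hornR t s 0 = t := by
      unfold hornR
      norm_num
    have hb : hornθ α δ 0 = α := by
      unfold hornθ
      norm_num
    ext i
    fin_cases i
    · show hornγ t s α δ 0 0 = p 0
      rw [hornγ₀, ha, hb, hp0c]
    · show hornγ t s α δ 0 1 = p 1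
      rw [hornγ₁, ha, hb, hp1c]
    · show hornγ t s α δ 0 2 = p 2
      rw [hornγ₂, ha, ht2]
  have hend1 : hornγ t s α δ 1 = q := by
    have ha : hornR t s 1 = s := by
      unfold hornR
      rw [show (2:ℝ) * 1 = 2 by norm_num, min_eq_right (by norm_num : (1:ℝ) ≤ 2)]
      ring
    have hb : hornθ α δ 1 = α + δ := by
      unfold hornθ
      rw [show (2:ℝ) * 1 - 1 = 1 by norm_num, max_eq_left (by norm_num : (0:ℝ) ≤ 1)]
      ring
    ext i
    fin_cases i
    · show hornγ t s α δ 1 0 = q 0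
      rw [hornγ₀, ha, hb, hq0c]
    · show hornγ t s α δ 1 1 = q 1
      rw [hornγ₁, ha, hb, hq1c]
    · show hornγ t s α δ 1 2 = q 2
      rw [hornγ₂, ha, hs2]
  -- Lipschitz control and conclusion
  set L : ℝ := 12 * s ^ 2 * (s - t) + 4 * s * (s - t) + 4 * s ^ 3 * |δ| with hL_def
  have hL0 : 0 ≤ L := by
    rw [hL_def]
    have h1 : (0:ℝ) ≤ s - t := by linarith only [hts]
    linarith only [mul_nonneg (sq_nonneg s) h1, mul_nonneg hs0 h1,
      mul_nonneg (pow_nonneg hs0 3) (abs_nonneg δ)]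
  have hkey : ∀ u ∈ Icc (0:ℝ) 1, ∀ v ∈ Icc (0:ℝ) 1,
      dist (hornγ t s α δ u) (hornγ t s α δ v) ≤ L * dist u v := fun u hu v hv =>
    horn_lip α δ ht0 hts hs1 hu hv
  have hLD : L ≤ 100 * ‖p - q‖ := by
    have hst : (0:ℝ) ≤ s - t := by linarith only [hts]
    have h1 : s * (s - t) ≤ s ^ 2 - t ^ 2 := by
      linarith only [mul_nonneg ht0 hst]
    have h2 : s ^ 2 * (s - t) ≤ s * (s - t) := by
      linarith only [mul_nonneg (mul_nonneg hs0 hst) (by linarith only [hs1] : (0:ℝ) ≤ 1 - s)]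
    have h3 : s ^ 3 * |δ| ≤ 7 * ‖p - q‖ := hAngle.trans (by linarith only [hCD])
    rw [hL_def]
    linarith only [h1, h2, h3, h2D, hD0]
  have hlip : LipschitzOnWith (Real.toNNReal L) (hornγ t s α δ) (Icc 0 1) := by
    rw [lipschitzOnWith_iff_dist_le_mul]
    intro x hx y hy
    rw [Real.coe_toNNReal L hL0]
    exact hkey x hx y hy
  exact ⟨hornγ t s α δ, hlip.continuousOn, hmaps, hend0, hend1,
    le_trans (evar_le_of_dist _ hL0 hkey) (ENNReal.ofReal_le_ofReal hLD)⟩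


theorem stmt4 :
    ∃ U ∈ nhds (0 : EuclideanSpace ℝ (Fin 3)),
      IsLNE ({p : EuclideanSpace ℝ (Fin 3) | (p 0) ^ 2 + (p 1) ^ 2 = (p 2) ^ 3} ∩ U) := by
  refine ⟨Metric.ball 0 1, Metric.ball_mem_nhds _ one_pos, 100, by norm_num, ?_⟩
  rintro x ⟨hxS, hxB⟩ y ⟨hyS, hyB⟩
  have hxn : ‖x‖ < 1 := mem_ball_zero_iff.1 hxB
  have hyn : ‖y‖ < 1 := mem_ball_zero_iff.1 hyB
  rcases le_total (x 2) (y 2) with h | h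
  · obtain ⟨γ, hcont, hmaps, h0, h1, hvar⟩ := horn_path x y hxS hyS hyn h
    refine le_trans ?_ hvar
    unfold innerDist
    exact iInf_le_of_le γ (iInf_le_of_le hcont (iInf_le_of_le hmaps
      (iInf_le_of_le h0 (iInf_le_of_le h1 le_rfl))))
  · obtain ⟨γ, hcont, hmaps, h0, h1, hvar⟩ := horn_path y x hyS hxS hxn h
    set Γ : ℝ → EuclideanSpace ℝ (Fin 3) := fun u => γ (1 - u) with hΓ_def
    have hmapsI : Set.MapsTo (fun u : ℝ => 1 - u) (Set.Icc 0 1) (Set.Icc (0:ℝ) 1) := by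
      intro u hu
      simp only [Set.mem_Icc] at hu ⊢
      constructor <;> linarith [hu.1, hu.2]
    have hcont' : ContinuousOn Γ (Set.Icc 0 1) :=
      hcont.comp ((continuous_const.sub continuous_id).continuousOn) hmapsI
    have hmaps' : Set.MapsTo Γ (Set.Icc 0 1)
        ({p : EuclideanSpace ℝ (Fin 3) | (p 0) ^ 2 + (p 1) ^ 2 = (p 2) ^ 3}
          ∩ Metric.ball 0 1) := fun u hu => hmaps (hmapsI hu)
    have h0' : Γ 0 = x := by
      rw [hΓ_def]
      show γ (1 - 0) = x
      norm_num
      exact h1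
    have h1' : Γ 1 = y := by
      rw [hΓ_def]
      show γ (1 - 1) = y
      norm_num
      exact h0
    have hvar' : eVariationOn Γ (Set.Icc 0 1) = eVariationOn γ (Set.Icc 0 1) := by
      have hanti : AntitoneOn (fun u : ℝ => 1 - u) (Set.Icc (0:ℝ) 1) :=
        fun u _ v _ huv => by simp only; linarith
      have hcomp := eVariationOn.comp_eq_of_antitoneOn γ (fun u : ℝ => 1 - u) hanti
      have himg : (fun u : ℝ => 1 - u) '' Set.Icc 0 1 = Set.Icc (0:ℝ) 1 := by
        rw [Set.image_const_sub_Icc]; norm_num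
      rw [himg] at hcomp
      exact hcomp
    calc innerDist ({p : EuclideanSpace ℝ (Fin 3) | (p 0) ^ 2 + (p 1) ^ 2 = (p 2) ^ 3}
            ∩ Metric.ball 0 1) x y
        ≤ eVariationOn Γ (Set.Icc 0 1) := by
          unfold innerDist
          exact iInf_le_of_le Γ (iInf_le_of_le hcont' (iInf_le_of_le hmaps'
            (iInf_le_of_le h0' (iInf_le_of_le h1' le_rfl))))
      _ = eVariationOn γ (Set.Icc 0 1) := hvar'
      _ ≤ ENNReal.ofReal (100 * ‖y - x‖) := hvar
      _ = ENNReal.ofReal (100 * ‖x - y‖) := by rw [norm_sub_rev]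
end

section
/- For every n ≥ 1, the set {A ∈ Matₙₓₙ(ℝ) : det A = 0} of singular n×n real matrices (equivalently, the set of matrices of rank at most n−1), endowed with the Frobenius (Euclidean) norm, is Lipschitz Normally Embedded. -/
open scoped ENNReal

attribute [local instance] Matrix.frobeniusNormedAddCommGroup

set_option maxHeartbeats 1000000

attribute [local instance] Matrix.frobeniusNormedSpace Matrix.frobeniusNormedRing

/-- Helper: a Lipschitz bound gives a bound on the variation over an interval. -/
lemma evar_le_of_lip {E : Type*} [NormedAddCommGroup E] (γ : ℝ → E) {a b : ℝ}
    (hab : a ≤ b) {C : ℝ} (hC : 0 ≤ C)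
    (h : ∀ s ∈ Set.Icc a b, ∀ t ∈ Set.Icc a b, ‖γ s - γ t‖ ≤ C * |s - t|) :
    eVariationOn γ (Set.Icc a b) ≤ ENNReal.ofReal (C * (b - a)) := by
  have hlip : LipschitzOnWith C.toNNReal γ (Set.Icc a b) := by
    apply LipschitzOnWith.of_dist_le_mul
    intro x hx y hy
    rw [dist_eq_norm, Real.coe_toNNReal _ hC]
    simpa [Real.dist_eq] using h x hx y hy
  have h1 := hlip.comp_eVariationOn_le (Set.mapsTo_id (Set.Icc a b))
  have h2 : eVariationOn (id : ℝ → ℝ) (Set.Icc a b) ≤ ENNReal.ofReal (b - a) := by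
    have := (monotoneOn_id (s := Set.Icc a b)).eVariationOn_le
      (Set.left_mem_Icc.2 hab) (Set.right_mem_Icc.2 hab)
    simpa [Set.inter_self] using this
  calc eVariationOn γ (Set.Icc a b) = eVariationOn (γ ∘ id) (Set.Icc a b) := rfl
    _ ≤ (C.toNNReal : ℝ≥0∞) * eVariationOn (id : ℝ → ℝ) (Set.Icc a b) := h1
    _ ≤ (C.toNNReal : ℝ≥0∞) * ENNReal.ofReal (b - a) := by gcongr
    _ = ENNReal.ofReal C * ENNReal.ofReal (b - a) := by
        simp [ENNReal.ofReal]
    _ = ENNReal.ofReal (C * (b - a)) := (ENNReal.ofReal_mul hC).symm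

theorem stmt6 (n : ℕ) (hn : 1 ≤ n) :
    IsLNE {A : Matrix (Fin n) (Fin n) ℝ | A.det = 0} := by
  classical
  set K : ℝ := ‖(1 : Matrix (Fin n) (Fin n) ℝ)‖ + 2 with hK
  have hK1 : (1 : ℝ) ≤ K := by
    have := norm_nonneg (1 : Matrix (Fin n) (Fin n) ℝ); simp only [hK]; linarith
  refine ⟨K, hK1, ?_⟩
  intro A hA B hB
  simp only [Set.mem_setOf_eq] at hA hB
  -- a nonzero kernel vector of `B`
  obtain ⟨w₀, hw₀ne, hw₀⟩ := Matrix.exists_mulVec_eq_zero_iff.2 hB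
  -- normalize it
  set s : ℝ := ∑ i, w₀ i ^ 2 with hs
  have hs_pos : 0 < s := by
    have : ∃ i, w₀ i ≠ 0 := by
      by_contra h
      push_neg at h
      exact hw₀ne (funext h)
    obtain ⟨i, hi⟩ := this
    exact Finset.sum_pos' (fun j _ => sq_nonneg _)
      ⟨i, Finset.mem_univ i, by positivity⟩
  set w : Fin n → ℝ := (Real.sqrt s)⁻¹ • w₀ with hwdef
  have hw_unit : ∑ i, w i ^ 2 = 1 := by
    simp only [hwdef, Pi.smul_apply, smul_eq_mul, mul_pow, ← Finset.mul_sum]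
    rw [← Real.sqrt_inv, Real.sq_sqrt (by positivity)]
    field_simp
    exact hs.symm
  have hBw : B.mulVec w = 0 := by
    simp [hwdef, Matrix.mulVec_smul, hw₀]
  have hw_ne : w ≠ 0 := by
    intro h
    rw [h] at hw_unit
    simp at hw_unit
  -- the rank one projection
  set W : Matrix (Fin n) (Fin n) ℝ := Matrix.vecMulVec w w with hW
  have hBW : B * W = 0 := by
    ext i j
    simp only [Matrix.mul_apply, hW, Matrix.vecMulVec_apply, Matrix.zero_apply]
    have : ∑ k, B i k * (w k * w j) = (∑ k, B i k * w k) * w j := by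
      rw [Finset.sum_mul]; exact Finset.sum_congr rfl fun k _ => by ring
    rw [this]
    have : ∑ k, B i k * w k = B.mulVec w i := rfl
    rw [this, hBw]; simp
  have hWw : W.mulVec w = w := by
    ext i
    simp only [hW, Matrix.mulVec, dotProduct, Matrix.vecMulVec_apply]
    have : ∑ k, w i * w k * w k = w i * ∑ k, w k ^ 2 := by
      rw [Finset.mul_sum]; exact Finset.sum_congr rfl fun k _ => by ring
    rw [this, hw_unit, mul_one]
  have hdet1W : (1 - W).det = 0 := by
    rw [← Matrix.exists_mulVec_eq_zero_iff]
    exact ⟨w, hw_ne, by rw [Matrix.sub_mulVec, Matrix.one_mulVec, hWw, sub_self]⟩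
  have hnormW : ‖W‖ ≤ 1 := by
    have hCR : W = Matrix.replicateCol Unit w * Matrix.replicateRow Unit w := Matrix.vecMulVec_eq Unit w w
    have hnv : ‖(WithLp.equiv 2 (Fin n → ℝ)).symm w‖ = 1 := by
      rw [EuclideanSpace.norm_eq]
      simp only [WithLp.equiv_symm_apply, PiLp.toLp_apply]
      rw [show (∑ i, ‖w i‖ ^ 2) = ∑ i, w i ^ 2 by
        exact Finset.sum_congr rfl fun i _ => by rw [Real.norm_eq_abs, sq_abs]]
      rw [hw_unit, Real.sqrt_one]
    calc ‖W‖ ≤ ‖Matrix.replicateCol Unit w‖ * ‖Matrix.replicateRow Unit w‖ := by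
          rw [hCR]; exact Matrix.frobenius_norm_mul _ _
      _ = 1 := by rw [Matrix.frobenius_norm_replicateCol, Matrix.frobenius_norm_replicateRow, ← WithLp.equiv_symm_apply, hnv, mul_one]
  -- the path
  set f : ℝ → ℝ := fun t => min 1 (2 * t) with hf
  set g : ℝ → ℝ := fun t => max 0 (2 * t - 1) with hg
  set γ : ℝ → Matrix (Fin n) (Fin n) ℝ :=
    fun t => (A + g t • (B - A)) * (1 - f t • W) with hγ
  have hfc : Continuous f := continuous_const.min (continuous_const.mul continuous_id)
  have hgc : Continuous g := continuous_const.max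
    ((continuous_const.mul continuous_id).sub continuous_const)
  have hγc : Continuous γ :=
    (continuous_const.add (hgc.smul continuous_const)).mul
      (continuous_const.sub (hfc.smul continuous_const))
  have h0 : γ 0 = A := by
    simp [hγ, hf, hg]
  have h1 : γ 1 = B := by
    have hgv : g 1 = 1 := by simp only [hg]; norm_num
    have hfv : f 1 = 1 := by simp only [hf]; norm_num
    show (A + g 1 • (B - A)) * (1 - f 1 • W) = B
    rw [hgv, hfv, one_smul, one_smul]
    have hAB : A + (B - A) = B := by abel
    rw [hAB, mul_sub, mul_one, hBW, sub_zero]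
  have hmaps : Set.MapsTo γ (Set.Icc 0 1) {A : Matrix (Fin n) (Fin n) ℝ | A.det = 0} := by
    intro t ht
    simp only [Set.mem_setOf_eq, hγ, Matrix.det_mul]
    rcases le_total t (1/2 : ℝ) with h | h
    · have hg0 : g t = 0 := by
        simp only [hg]; rw [max_eq_left]; linarith
      rw [hg0]
      simp [hA]
    · have hf1 : f t = 1 := by
        simp only [hf]; rw [min_eq_left]; linarith
      rw [hf1, one_smul, hdet1W, mul_zero]
  -- variation bounds
  set ε : ℝ := ‖A - B‖ with hε
  have hAW : A * W = (A - B) * W := by rw [sub_mul, hBW, sub_zero]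
  have hc1 : ‖A * W‖ ≤ ε := by
    rw [hAW]
    calc ‖(A - B) * W‖ ≤ ‖A - B‖ * ‖W‖ := Matrix.frobenius_norm_mul _ _
      _ ≤ ε * 1 := by apply mul_le_mul_of_nonneg_left hnormW (norm_nonneg _)
      _ = ε := mul_one ε
  have hc2 : ‖(B - A) * (1 - W)‖ ≤ ε * (‖(1 : Matrix (Fin n) (Fin n) ℝ)‖ + 1) := by
    calc ‖(B - A) * (1 - W)‖ ≤ ‖B - A‖ * ‖1 - W‖ := Matrix.frobenius_norm_mul _ _
      _ ≤ ε * (‖(1 : Matrix (Fin n) (Fin n) ℝ)‖ + 1) := by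
        apply mul_le_mul
        · rw [norm_sub_rev]
        · exact (norm_sub_le _ _).trans (by linarith [hnormW])
        · exact norm_nonneg _
        · exact norm_nonneg _
  have hε0 : (0 : ℝ) ≤ ε := norm_nonneg _
  -- first piece
  have hform1 : ∀ u ∈ Set.Icc (0:ℝ) (1/2), γ u = A - (2*u) • (A*W) := by
    intro u hu
    have hgv : g u = 0 := max_eq_left (by linarith [hu.2] : 2*u - 1 ≤ 0)
    have hfv : f u = 2*u := min_eq_right (by linarith [hu.2])
    show (A + g u • (B - A)) * (1 - f u • W) = A - (2*u) • (A*W)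
    rw [hgv, hfv, zero_smul, add_zero, mul_sub, mul_one, Matrix.mul_smul]
  have var1 : eVariationOn γ (Set.Icc 0 (1/2)) ≤
      ENNReal.ofReal ((2*‖A*W‖) * (1/2 - 0)) := by
    apply evar_le_of_lip γ (by norm_num) (by positivity)
    intro x hx y hy
    rw [hform1 x hx, hform1 y hy]
    have heq : (A - (2*x) • (A*W)) - (A - (2*y) • (A*W)) = (2*y - 2*x) • (A*W) := by
      rw [sub_smul]; abel
    rw [heq, norm_smul, Real.norm_eq_abs]
    have habs : |2*y - 2*x| = 2 * |x - y| := by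
      rw [show (2*y - 2*x) = 2*(y-x) by ring, abs_mul, abs_sub_comm]
      norm_num
    rw [habs]
    exact le_of_eq (by ring)
  -- second piece
  have hform2 : ∀ u ∈ Set.Icc (1/2:ℝ) 1,
      γ u = A * (1 - W) + (2*u - 1) • ((B - A) * (1 - W)) := by
    intro u hu
    have hgv : g u = 2*u - 1 := max_eq_right (by linarith [hu.1])
    have hfv : f u = 1 := min_eq_left (by linarith [hu.1])
    show (A + g u • (B - A)) * (1 - f u • W) = _
    rw [hgv, hfv, one_smul, add_mul, Matrix.smul_mul]
  have var2 : eVariationOn γ (Set.Icc (1/2) 1) ≤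
      ENNReal.ofReal ((2*‖(B - A) * (1 - W)‖) * (1 - 1/2)) := by
    apply evar_le_of_lip γ (by norm_num) (by positivity)
    intro x hx y hy
    rw [hform2 x hx, hform2 y hy]
    have heq : (A * (1 - W) + (2*x - 1) • ((B - A) * (1 - W)))
        - (A * (1 - W) + (2*y - 1) • ((B - A) * (1 - W)))
        = (2*x - 2*y) • ((B - A) * (1 - W)) := by
      rw [add_sub_add_left_eq_sub, ← sub_smul]
      congr 1
      ring
    rw [heq, norm_smul, Real.norm_eq_abs]
    have habs : |2*x - 2*y| = 2 * |x - y| := by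
      rw [show (2*x - 2*y) = 2*(x-y) by ring, abs_mul]
      norm_num
    rw [habs]
    exact le_of_eq (by ring)
  -- combine
  have hsplit := eVariationOn.Icc_add_Icc γ (s := Set.univ)
    (by norm_num : (0:ℝ) ≤ 1/2) (by norm_num : (1/2:ℝ) ≤ 1) (Set.mem_univ _)
  rw [Set.univ_inter, Set.univ_inter, Set.univ_inter] at hsplit
  have hvar : eVariationOn γ (Set.Icc 0 1) ≤ ENNReal.ofReal (K * ‖A - B‖) := by
    rw [← hsplit]
    calc eVariationOn γ (Set.Icc 0 (1/2)) + eVariationOn γ (Set.Icc (1/2) 1)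
        ≤ ENNReal.ofReal ((2*‖A*W‖) * (1/2 - 0))
          + ENNReal.ofReal ((2*‖(B - A) * (1 - W)‖) * (1 - 1/2)) := add_le_add var1 var2
      _ = ENNReal.ofReal ‖A*W‖ + ENNReal.ofReal ‖(B - A) * (1 - W)‖ := by
          rw [show (2*‖A*W‖) * (1/2 - 0) = ‖A*W‖ by ring,
            show (2*‖(B - A) * (1 - W)‖) * (1 - 1/2) = ‖(B - A) * (1 - W)‖ by ring]
      _ ≤ ENNReal.ofReal ε
          + ENNReal.ofReal (ε * (‖(1 : Matrix (Fin n) (Fin n) ℝ)‖ + 1)) :=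
          add_le_add (ENNReal.ofReal_le_ofReal hc1) (ENNReal.ofReal_le_ofReal hc2)
      _ = ENNReal.ofReal (ε + ε * (‖(1 : Matrix (Fin n) (Fin n) ℝ)‖ + 1)) :=
          (ENNReal.ofReal_add hε0 (by positivity)).symm
      _ = ENNReal.ofReal (K * ‖A - B‖) := by
          rw [hK, hε]; ring_nf
  refine le_trans ?_ hvar
  exact iInf_le_of_le γ (iInf_le_of_le hγc.continuousOn (iInf_le_of_le hmaps
    (iInf_le_of_le h0 (iInf_le_of_le h1 le_rfl))))
end

section
/- For all positive integers m, n and every integer t with 0 ≤ t ≤ min(m,n), the set {A ∈ Matₘₓₙ(ℝ) : rank A ≤ t}, endowed with the Frobenius (Euclidean) norm, is Lipschitz Normally Embedded. -/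
open scoped ENNReal

attribute [local instance] Matrix.frobeniusNormedAddCommGroup

open scoped NNReal

attribute [local instance] Matrix.frobeniusNormedSpace

/-- Auxiliary: the variation of a Lipschitz function on `Icc a b`. -/
lemma aux_evar_lip {E : Type*} [PseudoEMetricSpace E] {g : ℝ → E} {C : ℝ≥0} (h : LipschitzWith C g)
    {a b : ℝ} (hab : a ≤ b) :
    eVariationOn g (Set.Icc a b) ≤ (C : ℝ≥0∞) * ENNReal.ofReal (b - a) := by
  have h1 : eVariationOn (g ∘ id) (Set.Icc a b) ≤ (C : ℝ≥0∞) * eVariationOn id (Set.Icc a b) :=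
    LipschitzOnWith.comp_eVariationOn_le (h.lipschitzOnWith) (Set.mapsTo_univ _ _)
  have h2 : eVariationOn (id : ℝ → ℝ) (Set.Icc a b) ≤ ENNReal.ofReal (b - a) := by
    have := MonotoneOn.eVariationOn_le (monotoneOn_id (s := Set.Icc a b))
      (a := a) (b := b) ⟨le_refl a, hab⟩ ⟨hab, le_refl b⟩
    simpa using this
  calc eVariationOn g (Set.Icc a b) = eVariationOn (g ∘ id) (Set.Icc a b) := rfl
    _ ≤ (C : ℝ≥0∞) * eVariationOn id (Set.Icc a b) := h1
    _ ≤ (C : ℝ≥0∞) * ENNReal.ofReal (b - a) := mul_le_mul_right h2 _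

/-- Auxiliary: affine maps are Lipschitz. -/
lemma aux_lip_aff {E : Type*} [NormedAddCommGroup E] [NormedSpace ℝ E] (p v : E) (k : ℝ) :
    LipschitzWith (3 * ‖v‖).toNNReal (fun s : ℝ => p + (3 * s - k) • v) := by
  apply LipschitzWith.of_dist_le_mul
  intro s t
  have hd : (p + (3 * s - k) • v) - (p + (3 * t - k) • v) = (3 * (s - t)) • v := by
    rw [add_sub_add_left_eq_sub, ← sub_smul]; ring_nf
  rw [dist_eq_norm, hd, norm_smul, Real.coe_toNNReal _ (by positivity), Real.dist_eq,
    Real.norm_eq_abs, abs_mul]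
  rw [abs_of_nonneg (by norm_num : (0:ℝ) ≤ 3)]
  ring_nf
  exact le_refl _

/-- Auxiliary: the inner distance is bounded by the length of a 3-segment polyline
that stays in `X`. -/
lemma aux_innerDist_three_segments {E : Type*} [NormedAddCommGroup E] [NormedSpace ℝ E]
    (X : Set E) {x₀ x₁ x₂ x₃ : E}
    (h₁ : ∀ c ∈ Set.Icc (0:ℝ) 1, x₀ + c • (x₁ - x₀) ∈ X)
    (h₂ : ∀ c ∈ Set.Icc (0:ℝ) 1, x₁ + c • (x₂ - x₁) ∈ X)
    (h₃ : ∀ c ∈ Set.Icc (0:ℝ) 1, x₂ + c • (x₃ - x₂) ∈ X) :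
    innerDist X x₀ x₃ ≤
      ENNReal.ofReal ‖x₁ - x₀‖ + ENNReal.ofReal ‖x₂ - x₁‖ + ENNReal.ofReal ‖x₃ - x₂‖ := by
  set g₁ : ℝ → E := fun s => x₀ + (3 * s - 0) • (x₁ - x₀) with hg₁
  set g₂ : ℝ → E := fun s => x₁ + (3 * s - 1) • (x₂ - x₁) with hg₂
  set g₃ : ℝ → E := fun s => x₂ + (3 * s - 2) • (x₃ - x₂) with hg₃
  set γ : ℝ → E := fun s => if s ≤ 1/3 then g₁ s else if s ≤ 2/3 then g₂ s else g₃ s with hγ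
  have cg : ∀ (p v : E) (k : ℝ), Continuous (fun s : ℝ => p + (3 * s - k) • v) := fun p v k =>
    continuous_const.add (((continuous_const.mul continuous_id).sub continuous_const).smul
      continuous_const)
  have c23 : Continuous (fun s : ℝ => if s ≤ 2/3 then g₂ s else g₃ s) := by
    refine Continuous.if_le (cg _ _ _) (cg _ _ _) continuous_id continuous_const ?_
    intro s hs
    simp only [hg₂, hg₃, hs]
    norm_num
  have cγ : Continuous γ := by
    refine Continuous.if_le (cg _ _ _) c23 continuous_id continuous_const ?_
    intro s hs
    simp only [hg₁, hg₂, hs]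
    norm_num
  have γ0 : γ 0 = x₀ := by simp only [hγ, hg₁]; norm_num
  have γ1 : γ 1 = x₃ := by simp only [hγ, hg₃]; norm_num
  have maps : Set.MapsTo γ (Set.Icc 0 1) X := by
    intro s hs
    simp only [Set.mem_Icc] at hs
    by_cases h13 : s ≤ 1/3
    · have : γ s = x₀ + (3 * s) • (x₁ - x₀) := by simp only [hγ, if_pos h13, hg₁]; norm_num
      rw [this]
      exact h₁ (3 * s) ⟨by linarith [hs.1], by linarith⟩
    · by_cases h23 : s ≤ 2/3
      · have : γ s = x₁ + (3 * s - 1) • (x₂ - x₁) := by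
          simp only [hγ, if_neg h13, if_pos h23, hg₂]
        rw [this]
        exact h₂ (3 * s - 1) ⟨by linarith, by linarith⟩
      · have : γ s = x₂ + (3 * s - 2) • (x₃ - x₂) := by
          simp only [hγ, if_neg h13, if_neg h23, hg₃]
        rw [this]
        exact h₃ (3 * s - 2) ⟨by linarith, by linarith [hs.2]⟩
  have seg_bound : ∀ (p v : E) (k a b : ℝ), a ≤ b → b - a = 1/3 →
      eVariationOn (fun s : ℝ => p + (3 * s - k) • v) (Set.Icc a b) ≤ ENNReal.ofReal ‖v‖ := by
    intro p v k a b hab hlen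
    have := aux_evar_lip (aux_lip_aff p v k) hab
    refine this.trans ?_
    rw [hlen]
    have h3 : ((3 * ‖v‖).toNNReal : ℝ≥0∞) = ENNReal.ofReal (3 * ‖v‖) := rfl
    rw [h3, ← ENNReal.ofReal_mul (by positivity)]
    apply ENNReal.ofReal_le_ofReal
    rw [mul_one_div]
    ring_nf
    exact le_refl _
  have e1 : eVariationOn γ (Set.Icc 0 (1/3)) ≤ ENNReal.ofReal ‖x₁ - x₀‖ := by
    have heq : Set.EqOn γ g₁ (Set.Icc 0 (1/3)) := by
      intro s hs
      simp only [hγ, if_pos hs.2]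
    rw [eVariationOn.eq_of_eqOn heq]
    exact seg_bound _ _ _ _ _ (by norm_num) (by norm_num)
  have e2 : eVariationOn γ (Set.Icc (1/3) (2/3)) ≤ ENNReal.ofReal ‖x₂ - x₁‖ := by
    have heq : Set.EqOn γ g₂ (Set.Icc (1/3) (2/3)) := by
      intro s hs
      by_cases h13 : s ≤ 1/3
      · have hs13 : s = 1/3 := le_antisymm h13 hs.1
        simp only [hγ, if_pos h13, hg₁, hg₂, hs13]
        norm_num
      · simp only [hγ, if_neg h13, if_pos hs.2]
    rw [eVariationOn.eq_of_eqOn heq]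
    exact seg_bound _ _ _ _ _ (by norm_num) (by norm_num)
  have e3 : eVariationOn γ (Set.Icc (2/3) 1) ≤ ENNReal.ofReal ‖x₃ - x₂‖ := by
    have heq : Set.EqOn γ g₃ (Set.Icc (2/3) 1) := by
      intro s hs
      by_cases h13 : s ≤ 1/3
      · exfalso; have := hs.1; linarith
      · by_cases h23 : s ≤ 2/3
        · have hs23 : s = 2/3 := le_antisymm h23 hs.1
          simp only [hγ, if_neg h13, if_pos h23, hg₂, hg₃, hs23]
          norm_num
        · simp only [hγ, if_neg h13, if_neg h23]
    rw [eVariationOn.eq_of_eqOn heq]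
    exact seg_bound _ _ _ _ _ (by norm_num) (by norm_num)
  have split : eVariationOn γ (Set.Icc 0 1) =
      eVariationOn γ (Set.Icc 0 (1/3)) + eVariationOn γ (Set.Icc (1/3) (2/3)) +
        eVariationOn γ (Set.Icc (2/3) 1) := by
    have h1 := eVariationOn.Icc_add_Icc γ (s := Set.univ) (a := 0) (b := 1/3) (c := 1)
      (by norm_num) (by norm_num) (Set.mem_univ _)
    have h2 := eVariationOn.Icc_add_Icc γ (s := Set.univ) (a := 1/3) (b := 2/3) (c := 1)
      (by norm_num) (by norm_num) (Set.mem_univ _)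
    simp only [Set.univ_inter] at h1 h2
    rw [← h1, ← h2, add_assoc]
  calc innerDist X x₀ x₃ ≤ eVariationOn γ (Set.Icc 0 1) := by
        refine iInf_le_of_le γ ?_
        refine iInf_le_of_le cγ.continuousOn ?_
        refine iInf_le_of_le maps ?_
        refine iInf_le_of_le γ0 ?_
        exact iInf_le _ γ1
    _ = _ := split
    _ ≤ _ := add_le_add (add_le_add e1 e2) e3

/-- Auxiliary: there exists a projection matrix onto the column space of `B`,
with entries bounded by `1`. -/
lemma aux_exists_proj (m k : ℕ) (B : Matrix (Fin m) (Fin k) ℝ) :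
    ∃ P : Matrix (Fin m) (Fin m) ℝ, P * B = B ∧ P.rank ≤ B.rank ∧ ∀ i j, |P i j| ≤ 1 := by
  classical
  set E := EuclideanSpace ℝ (Fin m)
  set e : (Fin m → ℝ) ≃ₗ[ℝ] E := (WithLp.linearEquiv 2 ℝ (Fin m → ℝ)).symm with he
  set K : Submodule ℝ E := LinearMap.range (e.toLinearMap ∘ₗ B.mulVecLin) with hK
  set Pr : E →ₗ[ℝ] E := K.subtype ∘ₗ (Submodule.orthogonalProjectionOnto K).toLinearMap with hPr
  have hfix : ∀ x ∈ K, Pr x = x := by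
    intro x hx
    have : Submodule.orthogonalProjectionOnto K x = ⟨x, hx⟩ := Submodule.orthogonalProjectionOnto_mem_subspace_eq_self ⟨x, hx⟩
    simp [hPr, this]
  set f : (Fin m → ℝ) →ₗ[ℝ] (Fin m → ℝ) := e.symm.toLinearMap ∘ₗ Pr ∘ₗ e.toLinearMap with hf
  refine ⟨LinearMap.toMatrix' f, ?_, ?_, ?_⟩
  · apply Matrix.toLin'.injective
    rw [Matrix.toLin'_mul, Matrix.toLin'_toMatrix']
    refine LinearMap.ext fun v => ?_
    have hmem : e (B.mulVec v) ∈ K := ⟨v, rfl⟩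
    simp only [LinearMap.comp_apply, Matrix.toLin'_apply, hf, LinearMap.coe_comp,
      Function.comp_apply, LinearEquiv.coe_coe]
    rw [hfix _ hmem, LinearEquiv.symm_apply_apply]
  · have hml : (LinearMap.toMatrix' f).mulVecLin = f := by
      rw [← Matrix.toLin'_apply', Matrix.toLin'_toMatrix']
    have hrank : (LinearMap.toMatrix' f).rank = Module.finrank ℝ (LinearMap.range f) :=
      congrArg (fun g : (Fin m → ℝ) →ₗ[ℝ] (Fin m → ℝ) =>
        Module.finrank ℝ (LinearMap.range g)) hml
    rw [hrank]
    have hrangePr : LinearMap.range Pr = K := by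
      apply le_antisymm
      · rw [hPr, LinearMap.range_comp]
        exact (Submodule.map_subtype_le _ _)
      · intro x hx
        exact ⟨x, hfix x hx⟩
    have hrf : LinearMap.range f = K.map e.symm.toLinearMap := by
      rw [hf, LinearMap.range_comp, LinearMap.range_comp]
      rw [LinearEquiv.range, Submodule.map_top, hrangePr]
    rw [hrf, LinearEquiv.finrank_map_eq]
    have : K = (LinearMap.range B.mulVecLin).map e.toLinearMap := by
      rw [hK, LinearMap.range_comp]
    rw [this, LinearEquiv.finrank_map_eq, Matrix.rank]
  · intro i j
    rw [LinearMap.toMatrix'_apply]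
    have hsingle : (fun j' => if j' = j then (1:ℝ) else 0) = Pi.single j 1 := by
      ext j'; simp [Pi.single_apply]
    set u : E := e (Pi.single j 1) with hu
    have hval : f (Pi.single j 1) i = Pr u i := rfl
    rw [hval]
    have hnorm_u : ‖u‖ = 1 := by
      rw [EuclideanSpace.norm_eq]
      have : ∀ i', ‖u i'‖ ^ 2 = if i' = j then 1 else 0 := by
        intro i'
        have : u i' = (Pi.single j (1:ℝ) : Fin m → ℝ) i' := rfl
        rw [this, Pi.single_apply]
        split_ifs <;> simp
      rw [Finset.sum_congr rfl (fun i' _ => this i')]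
      simp
    have hPru : ‖Pr u‖ ≤ 1 := by
      have h1 : ‖Pr u‖ = ‖(Submodule.orthogonalProjectionOnto K u : E)‖ := rfl
      rw [h1]
      have h2 : ‖(Submodule.orthogonalProjectionOnto K u : E)‖ = ‖Submodule.orthogonalProjectionOnto K u‖ := rfl
      rw [h2]
      calc ‖Submodule.orthogonalProjectionOnto K u‖ ≤ ‖Submodule.orthogonalProjectionOnto K‖ * ‖u‖ :=
            (Submodule.orthogonalProjectionOnto K).le_opNorm u
        _ ≤ 1 * 1 := by
            apply mul_le_mul (Submodule.orthogonalProjectionOnto_norm_le K) (le_of_eq hnorm_u)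
              (norm_nonneg _) zero_le_one
        _ = 1 := one_mul 1
    calc |Pr u i| ≤ ‖Pr u‖ := by
          rw [EuclideanSpace.norm_eq]
          have h0 : |Pr u i| = Real.sqrt (‖Pr u i‖ ^ 2) := by
            rw [Real.sqrt_sq_eq_abs]; simp
          rw [h0]
          apply Real.sqrt_le_sqrt
          exact Finset.single_le_sum (f := fun i' => ‖Pr u i'‖ ^ 2)
            (fun i' _ => sq_nonneg _) (Finset.mem_univ i)
      _ ≤ 1 := hPru

/-- Auxiliary: a matrix with entries bounded by `c` has Frobenius norm at most `√(a·b)·c`. -/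
lemma aux_frob_norm_le {a b : ℕ} (M : Matrix (Fin a) (Fin b) ℝ) (c : ℝ) (hc : 0 ≤ c)
    (h : ∀ i j, |M i j| ≤ c) : ‖M‖ ≤ Real.sqrt ((a : ℝ) * b) * c := by
  rw [Matrix.frobenius_norm_def]
  have hterm : ∀ i j, ‖M i j‖ ^ (2:ℝ) ≤ c ^ 2 := by
    intro i j
    rw [Real.norm_eq_abs, Real.rpow_two]
    exact pow_le_pow_left₀ (abs_nonneg _) (h i j) 2
  have hsum : (∑ i, ∑ j, ‖M i j‖ ^ (2:ℝ)) ≤ ((a : ℝ) * b) * c ^ 2 := by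
    calc (∑ i, ∑ j, ‖M i j‖ ^ (2:ℝ)) ≤ ∑ _i : Fin a, ∑ _j : Fin b, c ^ 2 :=
          Finset.sum_le_sum fun i _ => Finset.sum_le_sum fun j _ => hterm i j
      _ = ((a : ℝ) * b) * c ^ 2 := by
          simp [Finset.sum_const, Finset.card_univ]
          ring
  calc (∑ i, ∑ j, ‖M i j‖ ^ (2:ℝ)) ^ (1/2 : ℝ) ≤ (((a : ℝ) * b) * c ^ 2) ^ (1/2 : ℝ) := by
        apply Real.rpow_le_rpow _ hsum (by norm_num)
        positivity
    _ = Real.sqrt ((a : ℝ) * b) * c := by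
        rw [← Real.sqrt_eq_rpow, Real.sqrt_mul (by positivity), Real.sqrt_sq hc]

set_option maxHeartbeats 1000000 in
theorem stmt7 (m n t : ℕ) (hm : 1 ≤ m) (hn : 1 ≤ n) (ht : t ≤ min m n) :
    IsLNE {A : Matrix (Fin m) (Fin n) ℝ | A.rank ≤ t} := by
  classical
  have hm1 : (1:ℝ) ≤ m := by exact_mod_cast hm
  have hn1 : (1:ℝ) ≤ n := by exact_mod_cast hn
  refine ⟨2 * m + 3 * m * n, by nlinarith, ?_⟩
  intro x hx y hy
  rw [Set.mem_setOf_eq] at hx hy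
  obtain ⟨P, hPB, hPrank, hPent⟩ := aux_exists_proj m n y
  obtain ⟨P', hP'B, _, hP'ent⟩ := aux_exists_proj n m y.transpose
  set Q : Matrix (Fin n) (Fin n) ℝ := P'.transpose with hQ
  have hBQ : y * Q = y := by
    have h := congrArg Matrix.transpose hP'B
    rwa [Matrix.transpose_mul, Matrix.transpose_transpose] at h
  -- norm bounds
  have hsqm : Real.sqrt ((m : ℝ) * m) = m := Real.sqrt_mul_self (by positivity)
  have hsqn : Real.sqrt ((n : ℝ) * n) = n := Real.sqrt_mul_self (by positivity)
  have hPn : ‖P‖ ≤ (m : ℝ) := by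
    have := aux_frob_norm_le P 1 zero_le_one hPent
    rwa [hsqm, mul_one] at this
  have hP1n : ‖P - 1‖ ≤ 2 * m := by
    have hent : ∀ i j, |(P - 1) i j| ≤ 2 := by
      intro i j
      rw [Matrix.sub_apply]
      calc |P i j - (1 : Matrix (Fin m) (Fin m) ℝ) i j|
          ≤ |P i j| + |(1 : Matrix (Fin m) (Fin m) ℝ) i j| := abs_sub _ _
        _ ≤ 1 + 1 := by
            refine add_le_add (hPent i j) ?_
            rw [Matrix.one_apply]
            split_ifs <;> norm_num
        _ = 2 := by norm_num
    have := aux_frob_norm_le (P - 1) 2 (by norm_num) hent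
    rw [hsqm] at this
    linarith
  have hQent : ∀ i j, |Q i j| ≤ 1 := fun i j => hP'ent j i
  have hQn : ‖Q‖ ≤ (n : ℝ) := by
    have := aux_frob_norm_le Q 1 zero_le_one hQent
    rwa [hsqn, mul_one] at this
  have hQ1n : ‖Q - 1‖ ≤ 2 * n := by
    have hent : ∀ i j, |(Q - 1) i j| ≤ 2 := by
      intro i j
      rw [Matrix.sub_apply]
      calc |Q i j - (1 : Matrix (Fin n) (Fin n) ℝ) i j|
          ≤ |Q i j| + |(1 : Matrix (Fin n) (Fin n) ℝ) i j| := abs_sub _ _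
        _ ≤ 1 + 1 := by
            refine add_le_add (hQent i j) ?_
            rw [Matrix.one_apply]
            split_ifs <;> norm_num
        _ = 2 := by norm_num
    have := aux_frob_norm_le (Q - 1) 2 (by norm_num) hent
    rw [hsqn] at this
    linarith
  -- the three-segment path
  set x₁ : Matrix (Fin m) (Fin n) ℝ := P * x with hx₁
  set x₂ : Matrix (Fin m) (Fin n) ℝ := P * x * Q with hx₂
  have h₁ : ∀ c ∈ Set.Icc (0:ℝ) 1, x + c • (x₁ - x) ∈
      {A : Matrix (Fin m) (Fin n) ℝ | A.rank ≤ t} := by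
    intro c _
    have heq : x + c • (x₁ - x) = (1 + c • (P - 1)) * x := by
      rw [Matrix.add_mul, Matrix.one_mul, Matrix.smul_mul, Matrix.sub_mul, Matrix.one_mul, hx₁]
    rw [Set.mem_setOf_eq, heq]
    exact (Matrix.rank_mul_le_right _ _).trans hx
  have h₂ : ∀ c ∈ Set.Icc (0:ℝ) 1, x₁ + c • (x₂ - x₁) ∈
      {A : Matrix (Fin m) (Fin n) ℝ | A.rank ≤ t} := by
    intro c _
    have heq : x₁ + c • (x₂ - x₁) = (P * x) * (1 + c • (Q - 1)) := by
      rw [Matrix.mul_add, Matrix.mul_one, Matrix.mul_smul, Matrix.mul_sub, Matrix.mul_one,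
        hx₁, hx₂]
    rw [Set.mem_setOf_eq, heq]
    exact (Matrix.rank_mul_le_left _ _).trans ((Matrix.rank_mul_le_right _ _).trans hx)
  have h₃ : ∀ c ∈ Set.Icc (0:ℝ) 1, x₂ + c • (y - x₂) ∈
      {A : Matrix (Fin m) (Fin n) ℝ | A.rank ≤ t} := by
    intro c _
    have heq : x₂ + c • (y - x₂) = P * ((x + c • (y - x)) * Q) := by
      simp only [hx₂, Matrix.add_mul, Matrix.smul_mul, Matrix.sub_mul, Matrix.mul_add,
        Matrix.mul_smul, Matrix.mul_sub, Matrix.mul_assoc, hBQ, hPB]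
    rw [Set.mem_setOf_eq, heq]
    exact (Matrix.rank_mul_le_left _ _).trans (hPrank.trans hy)
  -- lengths of the segments
  have d1 : x₁ - x = (P - 1) * (x - y) := by
    simp only [hx₁, Matrix.sub_mul, Matrix.mul_sub, Matrix.one_mul, hPB]
    abel
  have d2 : x₂ - x₁ = P * (x - y) * (Q - 1) := by
    simp only [hx₁, hx₂, Matrix.mul_sub, Matrix.sub_mul, Matrix.mul_one, Matrix.mul_assoc,
      hPB, hBQ]
    abel
  have d3 : y - x₂ = P * (y - x) * Q := by
    simp only [hx₂, Matrix.mul_sub, Matrix.sub_mul, Matrix.mul_assoc, hPB, hBQ]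
  set D : ℝ := ‖x - y‖ with hD
  have hD0 : 0 ≤ D := norm_nonneg _
  have b1 : ‖x₁ - x‖ ≤ 2 * m * D := by
    rw [d1]
    calc ‖(P - 1) * (x - y)‖ ≤ ‖P - 1‖ * ‖x - y‖ := Matrix.frobenius_norm_mul _ _
      _ ≤ 2 * m * D := by rw [hD]; exact mul_le_mul_of_nonneg_right hP1n (norm_nonneg _)
  have b2 : ‖x₂ - x₁‖ ≤ 2 * (m * n) * D := by
    rw [d2]
    calc ‖P * (x - y) * (Q - 1)‖ ≤ ‖P * (x - y)‖ * ‖Q - 1‖ := Matrix.frobenius_norm_mul _ _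
      _ ≤ (‖P‖ * ‖x - y‖) * ‖Q - 1‖ :=
          mul_le_mul_of_nonneg_right (Matrix.frobenius_norm_mul _ _) (norm_nonneg _)
      _ ≤ ((m : ℝ) * D) * (2 * n) := by
          rw [hD]
          apply mul_le_mul _ hQ1n (norm_nonneg _) (by positivity)
          exact mul_le_mul_of_nonneg_right hPn (norm_nonneg _)
      _ = 2 * (m * n) * D := by ring
  have b3 : ‖y - x₂‖ ≤ (m * n : ℝ) * D := by
    rw [d3]
    calc ‖P * (y - x) * Q‖ ≤ ‖P * (y - x)‖ * ‖Q‖ := Matrix.frobenius_norm_mul _ _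
      _ ≤ (‖P‖ * ‖y - x‖) * ‖Q‖ :=
          mul_le_mul_of_nonneg_right (Matrix.frobenius_norm_mul _ _) (norm_nonneg _)
      _ ≤ ((m : ℝ) * D) * n := by
          rw [hD, ← norm_sub_rev x y]
          apply mul_le_mul _ hQn (norm_nonneg _) (by positivity)
          exact mul_le_mul_of_nonneg_right hPn (norm_nonneg _)
      _ = (m * n : ℝ) * D := by ring
  calc innerDist {A : Matrix (Fin m) (Fin n) ℝ | A.rank ≤ t} x y
      ≤ ENNReal.ofReal ‖x₁ - x‖ + ENNReal.ofReal ‖x₂ - x₁‖ + ENNReal.ofReal ‖y - x₂‖ :=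
        aux_innerDist_three_segments _ h₁ h₂ h₃
    _ = ENNReal.ofReal (‖x₁ - x‖ + ‖x₂ - x₁‖ + ‖y - x₂‖) := by
        rw [ENNReal.ofReal_add (by positivity) (norm_nonneg _),
          ENNReal.ofReal_add (by positivity) (norm_nonneg _)]
    _ ≤ ENNReal.ofReal ((2 * m + 3 * m * n) * ‖x - y‖) := by
        apply ENNReal.ofReal_le_ofReal
        have : ((2 * m + 3 * m * n : ℝ)) * ‖x - y‖ =
            2 * m * D + (2 * (m * n) * D + (m * n : ℝ) * D) := by rw [hD]; ring
        rw [this]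
        linarith
end

section
/- For every n ≥ 1, the set {A ∈ Matₙₓₙ(ℝ) : A is upper triangular and det A = 0} of upper triangular n×n real matrices with determinant zero, endowed with the Frobenius (Euclidean) norm, is Lipschitz Normally Embedded. -/
open scoped ENNReal
open scoped NNReal

section Aux

variable {E : Type*} [NormedAddCommGroup E] [NormedSpace ℝ E]

lemma lipschitz_aux (p v : E) (d : ℝ) :
    LipschitzWith (2 * ‖v‖₊) (fun t : ℝ => p + (2 * t + d) • v) := by
  apply LipschitzWith.of_dist_le_mul
  intro s t
  have h : (p + (2 * s + d) • v) - (p + (2 * t + d) • v) = (2 * (s - t)) • v := by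
    rw [add_sub_add_left_eq_sub, ← sub_smul]
    congr 1
    ring
  rw [dist_eq_norm, h, norm_smul, dist_eq_norm, Real.norm_eq_abs, Real.norm_eq_abs, abs_mul]
  push_cast
  rw [abs_of_nonneg (by norm_num : (0:ℝ) ≤ 2)]
  ring_nf
  try exact le_rfl

lemma evar_id (a b : ℝ) (hab : a ≤ b) :
    eVariationOn (id : ℝ → ℝ) (Set.Icc a b) ≤ ENNReal.ofReal (b - a) := by
  have hm : MonotoneOn (id : ℝ → ℝ) (Set.Icc a b) := monotoneOn_id
  have := hm.eVariationOn_le (Set.left_mem_Icc.2 hab) (Set.right_mem_Icc.2 hab)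
  simpa using this

lemma evar_half (p v : E) (d a b : ℝ) (hab : a ≤ b) (h : b - a = 1 / 2) :
    eVariationOn (fun t : ℝ => p + (2 * t + d) • v) (Set.Icc a b)
      ≤ ENNReal.ofReal ‖v‖ := by
  have h1 : eVariationOn (fun t : ℝ => p + (2 * t + d) • v) (Set.Icc a b)
      ≤ ((2 * ‖v‖₊ : ℝ≥0) : ℝ≥0∞) * eVariationOn (id : ℝ → ℝ) (Set.Icc a b) := by
    have := ((lipschitz_aux p v d).lipschitzOnWith (s := Set.univ)).comp_eVariationOn_le
      (g := (id : ℝ → ℝ)) (s := Set.Icc a b) (Set.mapsTo_univ _ _)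
    simpa [Function.comp] using this
  refine h1.trans ?_
  calc ((2 * ‖v‖₊ : ℝ≥0) : ℝ≥0∞) * eVariationOn (id : ℝ → ℝ) (Set.Icc a b)
      ≤ ((2 * ‖v‖₊ : ℝ≥0) : ℝ≥0∞) * ENNReal.ofReal (b - a) :=
        mul_le_mul_right (evar_id a b hab) _
    _ = ENNReal.ofReal ‖v‖ := by
        rw [h, ← ENNReal.ofReal_coe_nnreal, ← ENNReal.ofReal_mul (by positivity)]
        congr 1
        push_cast
        ring

lemma innerDist_le_two_seg {X : Set E} {x z y : E}
    (h1 : ∀ t ∈ Set.Icc (0:ℝ) 1, x + t • (z - x) ∈ X)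
    (h2 : ∀ t ∈ Set.Icc (0:ℝ) 1, z + t • (y - z) ∈ X) :
    innerDist X x y ≤ ENNReal.ofReal ‖z - x‖ + ENNReal.ofReal ‖y - z‖ := by
  classical
  set γ : ℝ → E := fun t =>
    if t ≤ 1 / 2 then x + (2 * t + 0) • (z - x) else z + (2 * t + (-1)) • (y - z) with hγ
  have hcont : Continuous γ := by
    apply Continuous.if_le (by fun_prop) (by fun_prop) continuous_id continuous_const
    intro t ht
    subst ht
    norm_num
  have hmaps : Set.MapsTo γ (Set.Icc 0 1) X := by
    intro t ht
    simp only [Set.mem_Icc] at ht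
    by_cases h : t ≤ 1 / 2
    · have hmemt : (2 * t + 0) ∈ Set.Icc (0:ℝ) 1 := by constructor <;> nlinarith [ht.1, ht.2]
      have : γ t = x + (2 * t + 0) • (z - x) := by simp only [hγ]; rw [if_pos h]
      rw [this]; exact h1 _ hmemt
    · push_neg at h
      have hmemt : (2 * t + (-1)) ∈ Set.Icc (0:ℝ) 1 := by constructor <;> nlinarith [ht.1, ht.2]
      have : γ t = z + (2 * t + (-1)) • (y - z) := by simp only [hγ]; rw [if_neg (not_le.mpr h)]
      rw [this]; exact h2 _ hmemt
  have h0 : γ 0 = x := by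
    have : γ 0 = x + ((2:ℝ) * 0 + 0) • (z - x) := by
      simp only [hγ]; rw [if_pos (show (0:ℝ) ≤ 1/2 by norm_num)]
    rw [this]; norm_num
  have h1' : γ 1 = y := by
    have : γ 1 = z + ((2:ℝ) * 1 + (-1)) • (y - z) := by
      simp only [hγ]; rw [if_neg (show ¬((1:ℝ) ≤ 1/2) by norm_num)]
    rw [this]; norm_num
  have hvar : eVariationOn γ (Set.Icc 0 1)
      ≤ ENNReal.ofReal ‖z - x‖ + ENNReal.ofReal ‖y - z‖ := by
    have hsplit : eVariationOn γ (Set.Icc 0 (1/2)) + eVariationOn γ (Set.Icc (1/2) 1)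
        = eVariationOn γ (Set.Icc 0 1) := by
      have := eVariationOn.Icc_add_Icc γ (s := Set.univ)
        (a := (0:ℝ)) (b := 1/2) (c := 1) (by norm_num) (by norm_num) (Set.mem_univ _)
      simpa using this
    rw [← hsplit]
    gcongr
    · have heq : Set.EqOn γ (fun t : ℝ => x + (2 * t + 0) • (z - x)) (Set.Icc 0 (1/2)) := by
        intro t ht
        simp only [Set.mem_Icc] at ht
        simp only [hγ]; rw [if_pos ht.2]
      rw [eVariationOn.eq_of_eqOn heq]
      exact evar_half x (z - x) 0 0 (1/2) (by norm_num) (by norm_num)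
    · have heq : Set.EqOn γ (fun t : ℝ => z + (2 * t + (-1)) • (y - z)) (Set.Icc (1/2) 1) := by
        intro t ht
        simp only [Set.mem_Icc] at ht
        by_cases h : t ≤ 1 / 2
        · have heq2 : t = 1 / 2 := le_antisymm h ht.1
          subst heq2
          have : γ (1/2) = x + ((2:ℝ) * (1/2) + 0) • (z - x) := by simp only [hγ]; rw [if_pos le_rfl]
          rw [this]; norm_num
        · simp only [hγ]; rw [if_neg h]
      rw [eVariationOn.eq_of_eqOn heq]
      exact evar_half z (y - z) (-1) (1/2) 1 (by norm_num) (by norm_num)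
  calc innerDist X x y ≤ eVariationOn γ (Set.Icc 0 1) := by
        refine iInf_le_of_le γ (iInf_le_of_le hcont.continuousOn
          (iInf_le_of_le hmaps (iInf_le_of_le h0 (iInf_le_of_le h1' le_rfl))))
    _ ≤ _ := hvar

end Aux

attribute [local instance] Matrix.frobeniusNormedAddCommGroup Matrix.frobeniusNormedSpace

/-- Entrywise monotonicity of the Frobenius norm for real matrices. -/
lemma frob_mono {n : ℕ} (A B : Matrix (Fin n) (Fin n) ℝ)
    (h : ∀ i j, |A i j| ≤ |B i j|) : ‖A‖ ≤ ‖B‖ := by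
  have hn : ‖A‖₊ ≤ ‖B‖₊ := by
    rw [Matrix.frobenius_nnnorm_def, Matrix.frobenius_nnnorm_def]
    apply NNReal.rpow_le_rpow _ (by norm_num)
    apply Finset.sum_le_sum
    intro i _
    apply Finset.sum_le_sum
    intro j _
    apply NNReal.rpow_le_rpow _ (by norm_num)
    rw [← NNReal.coe_le_coe]
    simpa [Real.norm_eq_abs] using h i j
  exact_mod_cast hn

theorem stmt11 (n : ℕ) (hn : 1 ≤ n) :
    IsLNE {A : Matrix (Fin n) (Fin n) ℝ | (∀ i j, j < i → A i j = 0) ∧ A.det = 0} := by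
  classical
  refine ⟨3, by norm_num, ?_⟩
  intro x hx y hy
  obtain ⟨hxu, hxd⟩ := hx
  obtain ⟨hyu, hyd⟩ := hy
  -- extract vanishing diagonal entries
  have hxdiag : ∃ i : Fin n, x i i = 0 := by
    have := Matrix.det_of_upperTriangular (M := x) (fun i j h => hxu i j h)
    rw [this] at hxd
    obtain ⟨i, _, hi⟩ := Finset.prod_eq_zero_iff.mp hxd
    exact ⟨i, hi⟩
  have hydiag : ∃ j : Fin n, y j j = 0 := by
    have := Matrix.det_of_upperTriangular (M := y) (fun i j h => hyu i j h)
    rw [this] at hyd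
    obtain ⟨j, _, hj⟩ := Finset.prod_eq_zero_iff.mp hyd
    exact ⟨j, hj⟩
  obtain ⟨i, hi⟩ := hxdiag
  obtain ⟨j, hj⟩ := hydiag
  -- the midpoint matrix
  set w : Matrix (Fin n) (Fin n) ℝ := fun a b => if a = j ∧ b = j then 0 else x a b with hw
  have hwx : ∀ a b, ¬(a = j ∧ b = j) → w a b = x a b := by
    intro a b hab; simp [hw, if_neg hab]
  have hwjj : w j j = 0 := by simp [hw]
  have hwi : w i i = 0 := by
    by_cases h : i = j
    · subst h; exact hwjj
    · rw [hwx i i (by tauto)]; exact hi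
  -- the set
  set X : Set (Matrix (Fin n) (Fin n) ℝ) :=
    {A : Matrix (Fin n) (Fin n) ℝ | (∀ i j, j < i → A i j = 0) ∧ A.det = 0} with hX
  -- membership of a matrix in X given upper triangularity and a zero diagonal entry
  have hmem : ∀ (A : Matrix (Fin n) (Fin n) ℝ) (k : Fin n),
      (∀ a b, b < a → A a b = 0) → A k k = 0 → A ∈ X := by
    intro A k hA hk
    refine ⟨hA, ?_⟩
    rw [Matrix.det_of_upperTriangular (M := A) (fun a b h => hA a b h)]
    exact Finset.prod_eq_zero (Finset.mem_univ k) hk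
  -- the two segments lie in X
  have hseg1 : ∀ t ∈ Set.Icc (0:ℝ) 1, x + t • (w - x) ∈ X := by
    intro t _
    apply hmem _ i
    · intro a b hba
      have hne : ¬(a = j ∧ b = j) := by rintro ⟨rfl, rfl⟩; exact lt_irrefl _ hba
      have : w a b = x a b := hwx a b hne
      simp [Matrix.add_apply, Matrix.smul_apply, Matrix.sub_apply, this, hxu a b hba]
    · by_cases h : i = j
      · subst h
        simp [Matrix.add_apply, Matrix.smul_apply, Matrix.sub_apply, hi, hwjj]
      · have : w i i = x i i := hwx i i (by tauto)
        simp [Matrix.add_apply, Matrix.smul_apply, Matrix.sub_apply, this, hi]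
  have hseg2 : ∀ t ∈ Set.Icc (0:ℝ) 1, w + t • (y - w) ∈ X := by
    intro t _
    apply hmem _ j
    · intro a b hba
      have hne : ¬(a = j ∧ b = j) := by rintro ⟨rfl, rfl⟩; exact lt_irrefl _ hba
      have : w a b = x a b := hwx a b hne
      simp [Matrix.add_apply, Matrix.smul_apply, Matrix.sub_apply, this,
        hxu a b hba, hyu a b hba]
    · simp [Matrix.add_apply, Matrix.smul_apply, Matrix.sub_apply, hwjj, hj]
  -- norm estimates
  have hentry : ∀ a b, |(x - w) a b| ≤ |(x - y) a b| := by
    intro a b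
    by_cases h : a = j ∧ b = j
    · obtain ⟨rfl, rfl⟩ := h
      simp [Matrix.sub_apply, hwjj, hj]
    · rw [Matrix.sub_apply, hwx a b h]
      simp [Matrix.sub_apply, abs_nonneg]
  have hxw : ‖x - w‖ ≤ ‖x - y‖ := frob_mono _ _ hentry
  have hwy : ‖y - w‖ ≤ 2 * ‖x - y‖ := by
    calc ‖y - w‖ = ‖(y - x) + (x - w)‖ := by abel_nf
      _ ≤ ‖y - x‖ + ‖x - w‖ := norm_add_le _ _
      _ ≤ ‖x - y‖ + ‖x - y‖ := by rw [norm_sub_rev y x]; linarith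
      _ = 2 * ‖x - y‖ := by ring
  calc innerDist X x y ≤ ENNReal.ofReal ‖w - x‖ + ENNReal.ofReal ‖y - w‖ :=
        innerDist_le_two_seg hseg1 hseg2
    _ ≤ ENNReal.ofReal ‖x - y‖ + ENNReal.ofReal (2 * ‖x - y‖) := by
        refine add_le_add (ENNReal.ofReal_le_ofReal ?_) (ENNReal.ofReal_le_ofReal hwy)
        rw [norm_sub_rev]; exact hxw
    _ = ENNReal.ofReal (3 * ‖x - y‖) := by
        rw [← ENNReal.ofReal_add (norm_nonneg _) (by positivity)]
        congr 1
        ring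
end

section
/- Let a, b be integers with b > a ≥ 2 such that a does not divide b, and let X = {(x,y,z) ∈ ℂ³ : x^b + y^b + z^a = 0}. The germ of X at the origin is not Lipschitz Normally Embedded: for every neighborhood U of 0 in ℂ³, the set X ∩ U is not Lipschitz Normally Embedded. -/
open scoped ENNReal

lemma coord_le_norm (v : EuclideanSpace ℂ (Fin 3)) (i : Fin 3) : ‖v i‖ ≤ ‖v‖ := by
  rw [EuclideanSpace.norm_eq]
  have h1 : ‖v i‖ = Real.sqrt (‖v i‖^2) := by
    rw [Real.sqrt_sq (norm_nonneg _)]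
  rw [h1]
  apply Real.sqrt_le_sqrt
  exact Finset.single_le_sum (f := fun j => ‖v j‖^2) (fun j _ => sq_nonneg _) (Finset.mem_univ i)

lemma root_const {a : ℕ} (ha : 0 < a) {r : ℝ → ℂ} (hrc : ContinuousOn r (Set.Icc 0 1))
    (hra : ∀ t ∈ Set.Icc (0:ℝ) 1, r t ^ a = 1) (hr0 : r 0 = 1) : r 1 = 1 := by
  by_contra hne
  set F := ((Polynomial.nthRoots a (1:ℂ)).toFinset).erase 1 with hF
  have hmem : ∀ w : ℂ, w ^ a = 1 → w ≠ 1 → w ∈ F := by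
    intro w hw hw1
    rw [hF, Finset.mem_erase]
    exact ⟨hw1, Multiset.mem_toFinset.mpr ((Polynomial.mem_nthRoots ha).mpr hw)⟩
  have h1 : (0:ℝ) ∈ Set.Icc (0:ℝ) 1 := by norm_num
  have h2 : (1:ℝ) ∈ Set.Icc (0:ℝ) 1 := by norm_num
  have hFne : F.Nonempty := ⟨r 1, hmem _ (hra 1 h2) hne⟩
  set m := F.inf' hFne (fun w => ‖w - 1‖) with hm
  have hm0 : 0 < m := by
    rw [hm, Finset.lt_inf'_iff]
    intro w hw
    exact norm_pos_iff.mpr (sub_ne_zero.mpr (Finset.mem_erase.mp hw).1)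
  have hθc : ContinuousOn (fun t => ‖r t - 1‖) (Set.Icc 0 1) :=
    continuous_norm.comp_continuousOn (hrc.sub continuousOn_const)
  have hkey := intermediate_value_Icc zero_le_one hθc
  have hmem2 : m/2 ∈ Set.Icc (‖r 0 - 1‖) (‖r 1 - 1‖) := by
    rw [hr0]
    constructor
    · simp
      linarith
    · have : m ≤ ‖r 1 - 1‖ := Finset.inf'_le _ (hmem _ (hra 1 h2) hne)
      linarith
  obtain ⟨t, ht, hθt⟩ := hkey hmem2
  simp only [] at hθt
  rcases eq_or_ne (r t) 1 with h | h
  · rw [h] at hθt; simp at hθt; linarith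
  · have hle : m ≤ ‖r t - 1‖ := Finset.inf'_le _ (hmem _ (hra t ht) h)
    rw [hθt] at hle; linarith

theorem stmt12 (a b : ℕ) (ha : 2 ≤ a) (hab : a < b) (hdvd : ¬ a ∣ b) :
    ∀ U ∈ nhds (0 : EuclideanSpace ℂ (Fin 3)),
      ¬ IsLNE ({p : EuclideanSpace ℂ (Fin 3) |
        (p 0) ^ b + (p 1) ^ b + (p 2) ^ a = 0} ∩ U) := by
  intro U hU hLNE
  obtain ⟨K, hK1, hK⟩ := hLNE
  obtain ⟨ε, hε, hball⟩ := Metric.mem_nhds_iff.mp hU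
  have ha0' : a ≠ 0 := by omega
  have hapos : 0 < a := by omega
  have hb0 : b ≠ 0 := by omega
  have ha0 : (a:ℂ) ≠ 0 := Nat.cast_ne_zero.mpr ha0'
  have haR : (0:ℝ) < a := by exact_mod_cast hapos
  have hπ := Real.pi_pos
  -- the roots of unity
  set u : ℂ := Complex.exp ((Real.pi / a : ℝ) * Complex.I) with hu
  set ω : ℂ := Complex.exp ((2 * Real.pi / a : ℝ) * Complex.I) with hω
  have hua : u ^ a = -1 := by
    rw [hu, ← Complex.exp_nat_mul, ← Complex.exp_pi_mul_I]
    congr 1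
    push_cast
    field_simp
  have hωa : ω ^ a = 1 := by
    rw [hω, ← Complex.exp_nat_mul, ← Complex.exp_two_pi_mul_I]
    congr 1
    push_cast
    field_simp
  have haR2 : (2:ℝ) ≤ a := by exact_mod_cast ha
  have hω1 : ω ≠ 1 := by
    intro h
    have hre := congrArg Complex.re h
    rw [hω, Complex.exp_ofReal_mul_I_re, Complex.one_re] at hre
    have hpos : (0:ℝ) < 2 * Real.pi / a := div_pos (by linarith) haR
    have h2a : 2 * Real.pi / a < 2 * Real.pi := by
      rw [div_lt_iff₀ haR]
      nlinarith
    have hzero := (Real.cos_eq_one_iff_of_lt_of_lt (by linarith) h2a).mp hre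
    linarith
  have habs_u : ‖u‖ = 1 := by rw [hu]; exact Complex.norm_exp_ofReal_mul_I _
  have hune : u ≠ 0 := Complex.exp_ne_zero _
  -- the constant and scale
  set C := K * ‖1 - ω‖ with hC
  have hC0 : 0 < C := mul_pos (lt_of_lt_of_le one_pos hK1) (norm_pos_iff.mpr (sub_ne_zero.mpr (Ne.symm hω1)))
  set s : ℝ := min (1/2) (min (ε/4) (1/(4*C))) with hs
  have hs0 : 0 < s := lt_min (by norm_num) (lt_min (by positivity) (by positivity))
  have hs_half : s ≤ 1/2 := min_le_left _ _
  have hs1 : s ≤ 1 := le_trans hs_half (by norm_num)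
  have hs_eps : s ≤ ε/4 := le_trans (min_le_right _ _) (min_le_left _ _)
  have hs_C : s ≤ 1/(4*C) := le_trans (min_le_right _ _) (min_le_right _ _)
  have hsne : (s:ℂ) ≠ 0 := by exact_mod_cast hs0.ne'
  -- the two points
  set P : EuclideanSpace ℂ (Fin 3) :=
    EuclideanSpace.single (0 : Fin 3) ((s:ℂ)^a) + EuclideanSpace.single (2 : Fin 3) (u * (s:ℂ)^b) with hP
  set Q : EuclideanSpace ℂ (Fin 3) :=
    EuclideanSpace.single (0 : Fin 3) ((s:ℂ)^a) + EuclideanSpace.single (2 : Fin 3) (ω * (u * (s:ℂ)^b)) with hQ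
  have hP0 : P 0 = (s:ℂ)^a := by
    rw [hP]; simp [PiLp.add_apply, EuclideanSpace.single_apply]
  have hP1 : P 1 = 0 := by
    rw [hP]; simp [PiLp.add_apply, EuclideanSpace.single_apply]
  have hP2 : P 2 = u * (s:ℂ)^b := by
    rw [hP]; simp [PiLp.add_apply, EuclideanSpace.single_apply]
  have hQ0 : Q 0 = (s:ℂ)^a := by
    rw [hQ]; simp [PiLp.add_apply, EuclideanSpace.single_apply]
  have hQ1 : Q 1 = 0 := by
    rw [hQ]; simp [PiLp.add_apply, EuclideanSpace.single_apply]
  have hQ2 : Q 2 = ω * (u * (s:ℂ)^b) := by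
    rw [hQ]; simp [PiLp.add_apply, EuclideanSpace.single_apply]
  have hswap : ((s:ℂ)^a)^b = ((s:ℂ)^b)^a := by
    rw [← pow_mul, ← pow_mul, Nat.mul_comm]
  have hPX : (P 0) ^ b + (P 1) ^ b + (P 2) ^ a = 0 := by
    rw [hP0, hP1, hP2, mul_pow, hua, zero_pow hb0, hswap]; ring
  have hQX : (Q 0) ^ b + (Q 1) ^ b + (Q 2) ^ a = 0 := by
    rw [hQ0, hQ1, hQ2, mul_pow, mul_pow, hua, hωa, zero_pow hb0, hswap]; ring
  have hnorm_scb : ‖(s:ℂ)^b‖ = s^b := by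
    rw [norm_pow, Complex.norm_real, Real.norm_eq_abs, abs_of_pos hs0]
  have hnorm_sca : ‖(s:ℂ)^a‖ = s^a := by
    rw [norm_pow, Complex.norm_real, Real.norm_eq_abs, abs_of_pos hs0]
  have hsa_le : s^a ≤ s := pow_le_of_le_one hs0.le hs1 ha0'
  have hsb_le : s^b ≤ s := pow_le_of_le_one hs0.le hs1 hb0
  have hPU : P ∈ U := by
    apply hball
    rw [Metric.mem_ball, dist_zero_right]
    calc ‖P‖ ≤ ‖EuclideanSpace.single (0 : Fin 3) ((s:ℂ)^a)‖
        + ‖EuclideanSpace.single (2 : Fin 3) (u * (s:ℂ)^b)‖ := norm_add_le _ _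
      _ = s^a + s^b := by
          rw [EuclideanSpace.norm_single, EuclideanSpace.norm_single, norm_mul,
            habs_u, one_mul, hnorm_scb, hnorm_sca]
      _ < ε := by linarith
  have hQU : Q ∈ U := by
    apply hball
    rw [Metric.mem_ball, dist_zero_right]
    have habsω : ‖ω‖ = 1 := by rw [hω]; exact Complex.norm_exp_ofReal_mul_I _
    calc ‖Q‖ ≤ ‖EuclideanSpace.single (0 : Fin 3) ((s:ℂ)^a)‖
        + ‖EuclideanSpace.single (2 : Fin 3) (ω * (u * (s:ℂ)^b))‖ := norm_add_le _ _
      _ = s^a + s^b := by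
          rw [EuclideanSpace.norm_single, EuclideanSpace.norm_single, norm_mul, norm_mul,
            habs_u, habsω, one_mul, one_mul,
            hnorm_scb, hnorm_sca]
      _ < ε := by linarith
  have hPQ : P - Q = EuclideanSpace.single (2 : Fin 3) ((1 - ω) * (u * (s:ℂ)^b)) := by
    rw [hP, hQ]
    refine PiLp.ext fun j => ?_
    fin_cases j <;>
      simp [PiLp.sub_apply, PiLp.add_apply, EuclideanSpace.single_apply] <;> ring
  have hnormPQ : ‖P - Q‖ = ‖1 - ω‖ * s^b := by
    rw [hPQ, EuclideanSpace.norm_single, norm_mul, norm_mul, habs_u,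
      one_mul, hnorm_scb]
  have hlow : ENNReal.ofReal (s^a/2) ≤ innerDist ({p : EuclideanSpace ℂ (Fin 3) |
      (p 0) ^ b + (p 1) ^ b + (p 2) ^ a = 0} ∩ U) P Q := by
    rw [innerDist]
    refine le_iInf fun γ => le_iInf fun hγc => le_iInf fun hmaps =>
      le_iInf fun hγ0 => le_iInf fun hγ1 => ?_
    by_cases hcase : ∀ t ∈ Set.Icc (0:ℝ) 1,
        0 < (γ t 0).re ∧ ‖γ t 1‖ < ‖γ t 0‖
    · exfalso
      have hXmem : ∀ t ∈ Set.Icc (0:ℝ) 1,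
          (γ t 0)^b + (γ t 1)^b + (γ t 2)^a = 0 := fun t ht => (hmaps ht).1
      have hcx : ContinuousOn (fun t => γ t 0) (Set.Icc 0 1) :=
        (EuclideanSpace.proj (0:Fin 3)).continuous.comp_continuousOn hγc
      have hcy : ContinuousOn (fun t => γ t 1) (Set.Icc 0 1) :=
        (EuclideanSpace.proj (1:Fin 3)).continuous.comp_continuousOn hγc
      have hcz : ContinuousOn (fun t => γ t 2) (Set.Icc 0 1) :=
        (EuclideanSpace.proj (2:Fin 3)).continuous.comp_continuousOn hγc
      have hxne : ∀ t ∈ Set.Icc (0:ℝ) 1, γ t 0 ≠ 0 := by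
        intro t ht h0
        have h1 := (hcase t ht).1
        rw [h0] at h1
        simp at h1
      have habslt : ∀ t ∈ Set.Icc (0:ℝ) 1, ‖(γ t 1 / γ t 0)^b‖ < 1 := by
        intro t ht
        rw [norm_pow, norm_div]
        exact pow_lt_one₀ (div_nonneg (norm_nonneg _) (norm_nonneg _))
          ((div_lt_one (norm_pos_iff.mpr (hxne t ht))).mpr (hcase t ht).2) hb0
      have hwre : ∀ t ∈ Set.Icc (0:ℝ) 1, 0 < (1 + (γ t 1 / γ t 0)^b).re := by
        intro t ht
        have h2 := Complex.abs_re_le_norm ((γ t 1 / γ t 0)^b)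
        have h3 := habslt t ht
        rw [Complex.add_re, Complex.one_re]
        have h4 := (abs_lt.mp (lt_of_le_of_lt h2 h3)).1
        linarith
      have hwne : ∀ t ∈ Set.Icc (0:ℝ) 1, (1 + (γ t 1 / γ t 0)^b) ≠ 0 := by
        intro t ht h0
        have h1 := hwre t ht
        rw [h0] at h1
        simp at h1
      have hsumne : ∀ t ∈ Set.Icc (0:ℝ) 1, (γ t 0)^b + (γ t 1)^b ≠ 0 := by
        intro t ht h0
        have he : (γ t 1)^b = -((γ t 0)^b) := by linear_combination h0
        have he2 := congrArg norm he
        rw [norm_pow, norm_neg, norm_pow] at he2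
        have hlt := pow_lt_pow_left₀ (hcase t ht).2 (norm_nonneg _) hb0
        linarith
      set g : ℝ → ℂ := fun t => Complex.exp (((b:ℂ)/(a:ℂ)) * Complex.log (γ t 0)) *
        Complex.exp (((1:ℂ)/(a:ℂ)) * Complex.log (1 + (γ t 1 / γ t 0)^b)) with hg
      have hgne : ∀ t, g t ≠ 0 := fun t =>
        mul_ne_zero (Complex.exp_ne_zero _) (Complex.exp_ne_zero _)
      have hga : ∀ t ∈ Set.Icc (0:ℝ) 1, g t ^ a = (γ t 0)^b + (γ t 1)^b := by
        intro t ht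
        rw [hg]
        simp only []
        rw [mul_pow, ← Complex.exp_nat_mul, ← Complex.exp_nat_mul]
        have e1 : (a:ℂ) * (((b:ℂ)/(a:ℂ)) * Complex.log (γ t 0)) = b * Complex.log (γ t 0) := by
          field_simp
        have e2 : (a:ℂ) * (((1:ℂ)/(a:ℂ)) * Complex.log (1 + (γ t 1 / γ t 0)^b))
            = Complex.log (1 + (γ t 1 / γ t 0)^b) := by field_simp
        rw [e1, e2, Complex.exp_nat_mul, Complex.exp_log (hxne t ht),
          Complex.exp_log (hwne t ht), div_pow]
        field_simp [pow_ne_zero b (hxne t ht)]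
      have hgc : ContinuousOn g (Set.Icc 0 1) := by
        rw [hg]
        apply ContinuousOn.mul
        · exact Complex.continuous_exp.comp_continuousOn
            (continuousOn_const.mul (hcx.clog (fun t ht => Complex.mem_slitPlane_iff.mpr
              (Or.inl (hcase t ht).1))))
        · refine Complex.continuous_exp.comp_continuousOn (continuousOn_const.mul
            (ContinuousOn.clog ?_ ?_))
          · exact continuousOn_const.add ((hcy.div hcx hxne).pow b)
          · intro t ht
            exact Complex.mem_slitPlane_iff.mpr (Or.inl (hwre t ht))
      set r : ℝ → ℂ := fun t => γ t 2 / (u * g t) with hr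
      have hrc : ContinuousOn r (Set.Icc 0 1) := by
        rw [hr]
        exact hcz.div (continuousOn_const.mul hgc)
          (fun t ht => mul_ne_zero hune (hgne t))
      have hra : ∀ t ∈ Set.Icc (0:ℝ) 1, r t ^ a = 1 := by
        intro t ht
        have hza : (γ t 2)^a = -((γ t 0)^b + (γ t 1)^b) := by
          linear_combination hXmem t ht
        rw [hr]
        simp only []
        rw [div_pow, hza, mul_pow, hua, hga t ht, neg_one_mul, neg_div_neg_eq,
          div_self (hsumne t ht)]
      have hgP : ∀ t', γ t' 0 = (s:ℂ)^a → γ t' 1 = 0 → g t' = (s:ℂ)^b := by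
        intro t' hx0 hy0
        rw [hg]
        simp only [hx0, hy0]
        rw [zero_div, zero_pow hb0, add_zero, Complex.log_one, mul_zero,
          Complex.exp_zero, mul_one]
        have hsaR : ((s:ℂ))^a = ((s^a : ℝ) : ℂ) := by push_cast; ring
        rw [hsaR, ← Complex.ofReal_log (by positivity : (0:ℝ) ≤ s^a), Real.log_pow]
        have e3 : ((b:ℂ)/(a:ℂ)) * (((a:ℕ) * Real.log s : ℝ) : ℂ)
            = (b:ℕ) * ((Real.log s : ℝ) : ℂ) := by
          push_cast
          field_simp
        rw [e3, Complex.exp_nat_mul, ← Complex.ofReal_exp, Real.exp_log hs0]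
      have hx0v : γ 0 0 = (s:ℂ)^a := by rw [hγ0]; exact hP0
      have hy0v : γ 0 1 = 0 := by rw [hγ0]; exact hP1
      have hz0v : γ 0 2 = u * (s:ℂ)^b := by rw [hγ0]; exact hP2
      have hx1v : γ 1 0 = (s:ℂ)^a := by rw [hγ1]; exact hQ0
      have hy1v : γ 1 1 = 0 := by rw [hγ1]; exact hQ1
      have hz1v : γ 1 2 = ω * (u * (s:ℂ)^b) := by rw [hγ1]; exact hQ2
      have hsbne : ((s:ℂ))^b ≠ 0 := pow_ne_zero _ hsne
      have hr0 : r 0 = 1 := by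
        rw [hr]
        simp only []
        rw [hz0v, hgP 0 hx0v hy0v, div_self (mul_ne_zero hune hsbne)]
      have hr1 : r 1 = ω := by
        rw [hr]
        simp only []
        rw [hz1v, hgP 1 hx1v hy1v, mul_div_assoc, div_self (mul_ne_zero hune hsbne), mul_one]
      exact hω1 (hr1.symm.trans (root_const hapos hrc hra hr0))
    · push_neg at hcase
      obtain ⟨t, ht, himp⟩ := hcase
      have h0m : (0:ℝ) ∈ Set.Icc (0:ℝ) 1 := by norm_num
      have hd : s^a/2 ≤ ‖P - γ t‖ := by
        have hv0 : (P - γ t) 0 = (s:ℂ)^a - γ t 0 := by rw [PiLp.sub_apply, hP0]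
        have hv1 : (P - γ t) 1 = - γ t 1 := by rw [PiLp.sub_apply, hP1]; ring
        have hsaR : ((s:ℂ)^a) = ((s^a : ℝ) : ℂ) := by push_cast; ring
        have h4 : (0:ℝ) ≤ s^a := by positivity
        rcases le_or_gt (γ t 0).re 0 with hre | hre
        · have h1 : s^a ≤ ((s:ℂ)^a - γ t 0).re := by
            rw [Complex.sub_re, hsaR, Complex.ofReal_re]
            linarith
          have h2 : s^a ≤ ‖(P - γ t) 0‖ := by
            rw [hv0]; exact le_trans h1 (Complex.re_le_norm _)
          have h3 := coord_le_norm (P - γ t) 0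
          linarith
        · have hxy := himp hre
          rcases le_or_gt (s^a/2) (‖γ t 1‖) with hy | hy
          · have h2 : s^a/2 ≤ ‖(P - γ t) 1‖ := by
              rw [hv1, norm_neg]
              exact hy
            have h3 := coord_le_norm (P - γ t) 1
            linarith
          · have hxlt : ‖γ t 0‖ < s^a/2 := lt_of_le_of_lt hxy hy
            have h1 : s^a/2 ≤ ‖(s:ℂ)^a - γ t 0‖ := by
              have hns := norm_sub_norm_le ((s:ℂ)^a) (γ t 0)
              rw [hnorm_sca] at hns
              have hxn : ‖γ t 0‖ < s^a/2 := hxlt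
              linarith
            have h2 : s^a/2 ≤ ‖(P - γ t) 0‖ := by rw [hv0]; exact h1
            have h3 := coord_le_norm (P - γ t) 0
            linarith
      calc ENNReal.ofReal (s^a/2) ≤ ENNReal.ofReal (dist P (γ t)) := by
            apply ENNReal.ofReal_le_ofReal; rw [dist_eq_norm]; exact hd
        _ = edist P (γ t) := (edist_dist _ _).symm
        _ = edist (γ 0) (γ t) := by rw [hγ0]
        _ ≤ eVariationOn γ (Set.Icc 0 1) := eVariationOn.edist_le γ h0m ht
  have hup := hK P ⟨hPX, hPU⟩ Q ⟨hQX, hQU⟩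
  have hcomb := le_trans hlow hup
  rw [ENNReal.ofReal_le_ofReal_iff
    (mul_nonneg (le_trans zero_le_one hK1) (norm_nonneg _))] at hcomb
  rw [hnormPQ] at hcomb
  have hsb : s^b = s^a * s^(b-a) := by rw [← pow_add]; congr 1; omega
  have h1 : s^(b-a) ≤ s := pow_le_of_le_one hs0.le hs1 (by omega)
  have hsa : (0:ℝ) < s^a := pow_pos hs0 a
  have e4 : K * (‖1-ω‖ * s^b) = (C * s^a) * s^(b-a) := by rw [hC, hsb]; ring
  have h5 : (C * s^a) * s^(b-a) ≤ (C * s^a) * s :=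
    mul_le_mul_of_nonneg_left h1 (by positivity)
  have h6 : (C * s^a) * s ≤ (C * s^a) * (1/(4*C)) :=
    mul_le_mul_of_nonneg_left hs_C (by positivity)
  have h7 : (C * s^a) * (1/(4*C)) = s^a/4 := by field_simp
  rw [e4] at hcomb
  linarith
end

section
/- Let X = {(x,y,z,w) ∈ ℂ⁴ : y² = xz and w² = x⁴ + z⁴}. The germ of X at the origin is not Lipschitz Normally Embedded: for every neighborhood U of 0 in ℂ⁴, the set X ∩ U is not Lipschitz Normally Embedded. -/
open scoped ENNReal

open Complex Set

lemma abs4 (a c : ℂ) : ‖a^4 - c^4‖ ≤ ‖a-c‖ * (‖a‖ + ‖c‖)^3 := by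
  have h : a^4 - c^4 = (a - c) * (a^3 + a^2*c + a*c^2 + c^3) := by ring
  rw [h, norm_mul]
  gcongr
  calc ‖a^3 + a^2*c + a*c^2 + c^3‖
      ≤ ‖a‖^3 + ‖a‖^2 * ‖c‖ + ‖a‖ * ‖c‖^2 + ‖c‖^3 := by
        simpa [norm_mul, norm_pow] using
          (norm_add_le (a^3 + a^2*c + a*c^2) (c^3)).trans (by
            have h1 := norm_add_le (a^3 + a^2*c) (a*c^2)
            have h2 := norm_add_le (a^3) (a^2*c)
            simp only [norm_mul, norm_pow] at *
            linarith)
    _ ≤ (‖a‖ + ‖c‖)^3 := by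
        nlinarith [norm_nonneg a, norm_nonneg c]

lemma re_pos4 {t : ℝ} (ht : 0 < t) {a b : ℂ}
    (ha : ‖a - t‖ < t/10) (hb : ‖b - Complex.I*t‖ < t/10) :
    0 < (a^4 + b^4).re := by
  have habs_t : ‖((t:ℝ):ℂ)‖ = t := by
    rw [Complex.norm_real, Real.norm_eq_abs, abs_of_pos ht]
  have habs_It : ‖Complex.I * t‖ = t := by
    rw [norm_mul, Complex.norm_I, one_mul, habs_t]
  have hI4 : (Complex.I)^4 = 1 := by
    rw [show (4:ℕ) = 2*2 from rfl, pow_mul, Complex.I_sq]; norm_num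
  have hIt4 : (Complex.I * (t:ℂ))^4 = (t:ℂ)^4 := by rw [mul_pow, hI4, one_mul]
  have haa : ‖a‖ ≤ t + t/10 := by
    calc ‖a‖ = ‖(a - t) + t‖ := by ring_nf
      _ ≤ ‖a - t‖ + ‖((t:ℝ):ℂ)‖ := norm_add_le _ _
      _ ≤ t + t/10 := by rw [habs_t]; linarith
  have hbb : ‖b‖ ≤ t + t/10 := by
    calc ‖b‖ = ‖(b - Complex.I*t) + Complex.I*t‖ := by ring_nf
      _ ≤ ‖b - Complex.I*t‖ + ‖Complex.I*(t:ℂ)‖ := norm_add_le _ _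
      _ ≤ t + t/10 := by rw [habs_It]; linarith
  have hA' : ‖a^4 - (t:ℂ)^4‖ ≤ (t/10) * ((21*t/10))^3 := by
    calc ‖a^4 - (t:ℂ)^4‖ ≤ ‖a - t‖ * (‖a‖ + ‖((t:ℝ):ℂ)‖)^3 := abs4 a t
      _ ≤ (t/10) * ((21*t/10))^3 := by
          rw [habs_t]
          apply mul_le_mul ha.le _ (by positivity) (by positivity)
          apply pow_le_pow_left₀ (by positivity) (by linarith)
  have hB' : ‖b^4 - (t:ℂ)^4‖ ≤ (t/10) * ((21*t/10))^3 := by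
    calc ‖b^4 - (t:ℂ)^4‖ = ‖b^4 - (Complex.I*(t:ℂ))^4‖ := by rw [hIt4]
      _ ≤ ‖b - Complex.I*t‖ * (‖b‖ + ‖Complex.I*(t:ℂ)‖)^3 := abs4 b _
      _ ≤ (t/10) * ((21*t/10))^3 := by
          rw [habs_It]
          apply mul_le_mul hb.le _ (by positivity) (by positivity)
          apply pow_le_pow_left₀ (by positivity) (by linarith)
  have key : (a^4+b^4).re = (a^4 - (t:ℂ)^4).re + (b^4 - (t:ℂ)^4).re + 2*t^4 := by
    have h1 : a^4+b^4 = (a^4 - (t:ℂ)^4) + ((b^4 - (t:ℂ)^4) + (((2*t^4 : ℝ)):ℂ)) := by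
      push_cast; ring
    rw [h1]; simp [Complex.add_re, Complex.sub_re, ← Complex.ofReal_pow, Complex.ofReal_re]; ring
  have hra := neg_le_of_abs_le (Complex.abs_re_le_norm (a^4 - (t:ℂ)^4))
  have hrb := neg_le_of_abs_le (Complex.abs_re_le_norm (b^4 - (t:ℂ)^4))
  rw [key]
  nlinarith [pow_pos ht 4]

noncomputable def wit (t : ℝ) (s : ℝ) : EuclideanSpace ℂ (Fin 4) :=
  WithLp.toLp 2 ![(t:ℂ), ((Real.sqrt 2 / 2 * t : ℝ):ℂ) * (1 + I), I * t, ((s * (Real.sqrt 2 * t^2) : ℝ) : ℂ)]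

lemma coord_dist_le (p q : EuclideanSpace ℂ (Fin 4)) (i : Fin 4) : dist (p i) (q i) ≤ dist p q := by
  rw [EuclideanSpace.dist_eq]
  rw [show dist (p i) (q i) = Real.sqrt (dist (p i) (q i)^2) from (Real.sqrt_sq dist_nonneg).symm]
  apply Real.sqrt_le_sqrt
  exact Finset.single_le_sum (f := fun j => dist (p j) (q j)^2) (fun j _ => sq_nonneg _) (Finset.mem_univ i)

lemma key {t : ℝ} (ht : 0 < t) (γ : ℝ → EuclideanSpace ℂ (Fin 4))
    (hc : ContinuousOn γ (Set.Icc 0 1))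
    (hm : ∀ τ ∈ Set.Icc (0:ℝ) 1, (γ τ 3)^2 = (γ τ 0)^4 + (γ τ 2)^4)
    (h0 : γ 0 = wit t 1) (h1 : γ 1 = wit t (-1)) :
    ENNReal.ofReal (t/10) ≤ eVariationOn γ (Set.Icc 0 1) := by
  have h0m : (0:ℝ) ∈ Set.Icc (0:ℝ) 1 := ⟨le_refl _, zero_le_one⟩
  have h1m : (1:ℝ) ∈ Set.Icc (0:ℝ) 1 := ⟨zero_le_one, le_refl _⟩
  by_cases hA : ∃ τ ∈ Set.Icc (0:ℝ) 1,
      t/10 ≤ dist (γ τ 0) ((t:ℝ):ℂ) ∨ t/10 ≤ dist (γ τ 2) (I*(t:ℂ))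
  · obtain ⟨τ, hτ, hd⟩ := hA
    have hle : t/10 ≤ dist (γ 0) (γ τ) := by
      rcases hd with h | h
      · calc t/10 ≤ dist (γ τ 0) ((t:ℝ):ℂ) := h
          _ = dist (γ 0 0) (γ τ 0) := by rw [h0]; exact (dist_comm _ _)
          _ ≤ dist (γ 0) (γ τ) := coord_dist_le _ _ 0
      · calc t/10 ≤ dist (γ τ 2) (I*(t:ℂ)) := h
          _ = dist (γ 0 2) (γ τ 2) := by rw [h0]; exact (dist_comm _ _)
          _ ≤ dist (γ 0) (γ τ) := coord_dist_le _ _ 2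
    calc ENNReal.ofReal (t/10) ≤ edist (γ 0) (γ τ) := by
          rw [edist_dist]; exact ENNReal.ofReal_le_ofReal hle
      _ ≤ eVariationOn γ (Set.Icc 0 1) := eVariationOn.edist_le γ h0m hτ
  · push_neg at hA
    exfalso
    set g : ℝ → ℂ := fun τ => (γ τ 0)^4 + (γ τ 2)^4 with hg
    have hgre : ∀ τ ∈ Set.Icc (0:ℝ) 1, 0 < (g τ).re := by
      intro τ hτ
      obtain ⟨ha, hb⟩ := hA τ hτ
      exact re_pos4 ht (by rwa [Complex.dist_eq] at ha) (by rwa [Complex.dist_eq] at hb)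
    have hg0 : ∀ τ ∈ Set.Icc (0:ℝ) 1, g τ ≠ 0 := by
      intro τ hτ h
      have := hgre τ hτ
      rw [h] at this; simp at this
    have hcont : ∀ i : Fin 4, ContinuousOn (fun τ => γ τ i) (Set.Icc (0:ℝ) 1) :=
      fun i => (EuclideanSpace.proj (𝕜 := ℂ) i).continuous.comp_continuousOn hc
    have hgc : ContinuousOn g (Set.Icc (0:ℝ) 1) := ((hcont 0).pow 4).add ((hcont 2).pow 4)
    set sq : ℝ → ℂ := fun τ => (g τ) ^ ((1:ℂ)/2) with hsq
    have hsqc : ContinuousOn sq (Set.Icc (0:ℝ) 1) := by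
      intro τ hτ
      exact (continuousAt_cpow_const (Complex.mem_slitPlane_iff.mpr (Or.inl (hgre τ hτ)))).comp_continuousWithinAt (hgc τ hτ)
    have hsqsq : ∀ τ ∈ Set.Icc (0:ℝ) 1, (sq τ)^2 = g τ := by
      intro τ hτ
      rw [hsq]
      simp only
      rw [pow_two, ← Complex.cpow_add _ _ (hg0 τ hτ)]
      norm_num
    have hsqne : ∀ τ ∈ Set.Icc (0:ℝ) 1, sq τ ≠ 0 := by
      intro τ hτ h
      apply hg0 τ hτ
      rw [← hsqsq τ hτ, h]; ring
    set s : ℝ → ℂ := fun τ => γ τ 3 / sq τ with hsdef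
    have hssq : ∀ τ ∈ Set.Icc (0:ℝ) 1, (s τ)^2 = 1 := by
      intro τ hτ
      rw [hsdef]
      simp only
      rw [div_pow, hsqsq τ hτ, hm τ hτ]
      exact div_self (hg0 τ hτ)
    have hs01 : ∀ τ ∈ Set.Icc (0:ℝ) 1, s τ = 1 ∨ s τ = -1 := by
      intro τ hτ
      have h : (s τ - 1) * (s τ + 1) = 0 := by linear_combination hssq τ hτ
      rcases mul_eq_zero.mp h with h | h
      · left; linear_combination h
      · right; linear_combination h
    have hsc : ContinuousOn s (Set.Icc (0:ℝ) 1) := (hcont 3).div hsqc hsqne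
    have hgeq : g 0 = g 1 := by
      rw [hg]; simp only; rw [h0, h1]; simp [wit]
    have hsq01 : sq 0 = sq 1 := by rw [hsq]; simp only; rw [hgeq]
    have hs1 : s 1 = - s 0 := by
      rw [hsdef]; simp only
      rw [h0, h1, ← hsq01]
      rw [show wit t (-1) 3 = -(wit t 1 3) by
        show (((-1 : ℝ) * (Real.sqrt 2 * t^2) : ℝ) : ℂ) = -(((1 * (Real.sqrt 2 * t^2) : ℝ)) : ℂ)
        push_cast; ring]
      ring
    have hs0ne : s 0 ≠ 0 := by
      intro h
      have := hssq 0 h0m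
      rw [h] at this; simp at this
    -- IVT
    have hrc : ContinuousOn (fun τ => (s τ).re) (Set.Icc (0:ℝ) 1) :=
      Complex.continuous_re.comp_continuousOn hsc
    have hiv := intermediate_value_uIcc (a := (0:ℝ)) (b := 1)
      (f := fun τ => (s τ).re) (by rwa [Set.uIcc_of_le zero_le_one])
    have h0mem : (0:ℝ) ∈ Set.uIcc ((s 0).re) ((s 1).re) := by
      rcases hs01 0 h0m with h | h
      · rw [h, hs1, h]; simp [Set.uIcc]
      · rw [h, hs1, h]; simp [Set.uIcc]
    obtain ⟨τ, hτ, hfτ⟩ := hiv h0mem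
    rw [Set.uIcc_of_le zero_le_one] at hτ
    rcases hs01 τ hτ with h | h <;> simp [h] at hfτ
lemma hc2' : (((Real.sqrt 2 : ℝ)):ℂ)^2 = 2 := by
  norm_cast
  exact Real.sq_sqrt (by norm_num)

lemma wit_eq1 (t s : ℝ) : (wit t s 1)^2 = wit t s 0 * wit t s 2 := by
  show ((((Real.sqrt 2 / 2 * t : ℝ)):ℂ) * (1 + I))^2 = ((t:ℝ):ℂ) * (I * ((t:ℝ):ℂ))
  push_cast
  linear_combination ((t:ℂ)^2*(1+I)^2/4) * hc2' + ((t:ℂ)^2/2) * Complex.I_sq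

lemma wit_eq2 (t : ℝ) {s : ℝ} (hs : s = 1 ∨ s = -1) :
    (wit t s 3)^2 = (wit t s 0)^4 + (wit t s 2)^4 := by
  show (((s * (Real.sqrt 2 * t^2) : ℝ)):ℂ)^2 = ((t:ℝ):ℂ)^4 + (I * ((t:ℝ):ℂ))^4
  push_cast
  rcases hs with h | h <;> rw [h] <;> push_cast <;>
    linear_combination (t:ℂ)^4 * hc2' + (-(t:ℂ)^4*(I^2-1)) * Complex.I_sq

lemma norm_one_add_I_sq : ‖(1 + I : ℂ)‖^2 = 2 := by
  rw [Complex.sq_norm]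
  simp [Complex.normSq_apply]
  norm_num

lemma wit_norm_le {t : ℝ} (ht : 0 < t) (ht1 : t ≤ 1) {s : ℝ} (hs : |s| ≤ 1) :
    ‖wit t s‖ ≤ 3 * t := by
  have h2 : (Real.sqrt 2)^2 = 2 := Real.sq_sqrt (by norm_num)
  rw [EuclideanSpace.norm_eq]
  rw [show (3*t) = Real.sqrt ((3*t)^2) from (Real.sqrt_sq (by positivity)).symm]
  apply Real.sqrt_le_sqrt
  rw [Fin.sum_univ_four]
  have e0 : ‖wit t s 0‖^2 = t^2 := by
    show ‖((t:ℝ):ℂ)‖^2 = t^2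
    rw [Complex.norm_real, Real.norm_eq_abs, _root_.sq_abs]
  have e1 : ‖wit t s 1‖^2 = t^2 := by
    show ‖(((Real.sqrt 2 / 2 * t : ℝ)):ℂ) * (1+I)‖^2 = t^2
    rw [norm_mul, mul_pow, Complex.norm_real, Real.norm_eq_abs, _root_.sq_abs, norm_one_add_I_sq]
    nlinarith [h2]
  have e2 : ‖wit t s 2‖^2 = t^2 := by
    show ‖I * ((t:ℝ):ℂ)‖^2 = t^2
    rw [norm_mul, Complex.norm_I, one_mul, Complex.norm_real, Real.norm_eq_abs, _root_.sq_abs]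
  have e3 : ‖wit t s 3‖^2 = s^2 * (2 * t^4) := by
    show ‖(((s * (Real.sqrt 2 * t^2) : ℝ)):ℂ)‖^2 = s^2 * (2*t^4)
    rw [Complex.norm_real, Real.norm_eq_abs, _root_.sq_abs]
    nlinarith [h2]
  rw [e0, e1, e2, e3]
  have hs2 : s^2 ≤ 1 := by nlinarith [abs_nonneg s, _root_.sq_abs s, abs_le.mp hs]
  have ht2 : t^2 ≤ 1 := by nlinarith
  have h4a : s^2*(2*t^4) ≤ 2*t^4 := mul_le_of_le_one_left (by positivity) hs2
  have h4b : t^4 ≤ t^2 := by nlinarith [sq_nonneg t, pow_pos ht 2]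
  nlinarith [pow_pos ht 2]

lemma wit_sub_norm_le {t : ℝ} (ht : 0 < t) : ‖wit t 1 - wit t (-1)‖ ≤ 3 * t^2 := by
  have h2 : (Real.sqrt 2)^2 = 2 := Real.sq_sqrt (by norm_num)
  rw [EuclideanSpace.norm_eq]
  rw [show (3*t^2) = Real.sqrt ((3*t^2)^2) from (Real.sqrt_sq (by positivity)).symm]
  apply Real.sqrt_le_sqrt
  rw [Fin.sum_univ_four]
  have sub_apply : ∀ i : Fin 4, (wit t 1 - wit t (-1)) i = wit t 1 i - wit t (-1) i :=
    fun i => rfl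
  have e0 : ‖(wit t 1 - wit t (-1)) 0‖^2 = 0 := by
    rw [sub_apply]; show ‖((t:ℝ):ℂ) - ((t:ℝ):ℂ)‖^2 = 0; simp
  have e1 : ‖(wit t 1 - wit t (-1)) 1‖^2 = 0 := by
    rw [sub_apply]; show ‖(((Real.sqrt 2 / 2 * t : ℝ)):ℂ) * (1+I) - (((Real.sqrt 2 / 2 * t : ℝ)):ℂ) * (1+I)‖^2 = 0
    simp
  have e2 : ‖(wit t 1 - wit t (-1)) 2‖^2 = 0 := by
    rw [sub_apply]; show ‖I * ((t:ℝ):ℂ) - I * ((t:ℝ):ℂ)‖^2 = 0; simp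
  have e3 : ‖(wit t 1 - wit t (-1)) 3‖^2 = 8 * t^4 := by
    rw [sub_apply]
    show ‖((((1:ℝ) * (Real.sqrt 2 * t^2) : ℝ)):ℂ) - ((((-1:ℝ) * (Real.sqrt 2 * t^2) : ℝ)):ℂ)‖^2 = 8*t^4
    rw [show ((((1:ℝ) * (Real.sqrt 2 * t^2) : ℝ)):ℂ) - ((((-1:ℝ) * (Real.sqrt 2 * t^2) : ℝ)):ℂ)
        = (((2 * (Real.sqrt 2 * t^2) : ℝ)):ℂ) by push_cast; ring]
    rw [Complex.norm_real, Real.norm_eq_abs, _root_.sq_abs]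
    nlinarith [h2]
  rw [e0, e1, e2, e3]
  nlinarith [pow_pos ht 4]

theorem stmt17 :
    ∀ U ∈ nhds (0 : EuclideanSpace ℂ (Fin 4)),
      ¬ IsLNE ({p : EuclideanSpace ℂ (Fin 4) |
        (p 1) ^ 2 = p 0 * p 2 ∧ (p 3) ^ 2 = (p 0) ^ 4 + (p 2) ^ 4} ∩ U) := by
  rintro U hU ⟨K, hK1, hK⟩
  obtain ⟨ε, hε, hball⟩ := Metric.mem_nhds_iff.mp hU
  have hKpos : 0 < K := lt_of_lt_of_le one_pos hK1
  set t := min (ε/4) (min 1 (1/(40*K))) with htd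
  have ht : 0 < t := lt_min (by positivity) (lt_min one_pos (by positivity))
  have ht1 : t ≤ 1 := (min_le_right _ _).trans (min_le_left _ _)
  have htK : t ≤ 1/(40*K) := (min_le_right _ _).trans (min_le_right _ _)
  have htε : t ≤ ε/4 := min_le_left _ _
  have hballmem : ∀ s : ℝ, |s| ≤ 1 → wit t s ∈ U := by
    intro s hs
    apply hball
    rw [mem_ball_zero_iff]
    calc ‖wit t s‖ ≤ 3*t := wit_norm_le ht ht1 hs
      _ < ε := by linarith
  have hmp : wit t 1 ∈ ({p : EuclideanSpace ℂ (Fin 4) |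
      (p 1) ^ 2 = p 0 * p 2 ∧ (p 3) ^ 2 = (p 0) ^ 4 + (p 2) ^ 4} ∩ U) :=
    ⟨⟨wit_eq1 t 1, wit_eq2 (s := 1) t (Or.inl rfl)⟩, hballmem 1 (by norm_num)⟩
  have hmq : wit t (-1) ∈ ({p : EuclideanSpace ℂ (Fin 4) |
      (p 1) ^ 2 = p 0 * p 2 ∧ (p 3) ^ 2 = (p 0) ^ 4 + (p 2) ^ 4} ∩ U) :=
    ⟨⟨wit_eq1 t (-1), wit_eq2 (s := -1) t (Or.inr rfl)⟩, hballmem (-1) (by norm_num)⟩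
  have hlow : ENNReal.ofReal (t/10) ≤ innerDist ({p : EuclideanSpace ℂ (Fin 4) |
      (p 1) ^ 2 = p 0 * p 2 ∧ (p 3) ^ 2 = (p 0) ^ 4 + (p 2) ^ 4} ∩ U)
      (wit t 1) (wit t (-1)) := by
    rw [innerDist]
    refine le_iInf fun γ => le_iInf fun hγc => le_iInf fun hγm => le_iInf fun hγ0 =>
      le_iInf fun hγ1 => ?_
    exact key ht γ hγc (fun τ hτ => (hγm hτ).1.2) hγ0 hγ1
  have hup := hK _ hmp _ hmq
  have hle : t/10 ≤ K * ‖wit t 1 - wit t (-1)‖ := by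
    rw [← ENNReal.ofReal_le_ofReal_iff (by positivity)]
    exact hlow.trans hup
  have hle2 : K * ‖wit t 1 - wit t (-1)‖ ≤ K * (3*t^2) :=
    mul_le_mul_of_nonneg_left (wit_sub_norm_le ht) hKpos.le
  have h40 : t*(40*K) ≤ 1 := by
    rw [le_div_iff₀ (by positivity)] at htK
    exact htK
  nlinarith [ht, hKpos]
end
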